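/- arXiv:1605.06619 — 5 statements merged into one kernel-verified Lean document; each statement's English description precedes it below -/
import Mathlib

section
/- Let f : ℝ^m → ℝ be differentiable with L-Lipschitz gradient. Then for all x, y: (1/L)‖∇f(x) - ∇f(y)‖² ≤ ⟨∇f(x) - ∇f(y), x - y⟩ ≤ L‖x - y‖², provided f is additionally convex (for the first inequality). -/
open scoped RealInnerProductSpace

section Aux

variable {E : Type*} [NormedAddCommGroup E] [InnerProductSpace ℝ E] [CompleteSpace E]

/-- Derivative of `f` along a line, in terms of the gradient. -/
lemma aux_line_hasDerivAt (f : E → ℝ) (f' : E → E)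
    (hgrad : ∀ x, HasGradientAt f (f' x) x) (a v : E) (t : ℝ) :
    HasDerivAt (fun s : ℝ => f (a + s • v)) ⟪f' (a + t • v), v⟫ t := by
  have hc : HasDerivAt (fun s : ℝ => a + s • v) v t := by
    simpa using ((hasDerivAt_id t).smul_const v).const_add a
  have h := (hgrad (a + t • v)).hasFDerivAt.comp_hasDerivAt t hc
  simp [InnerProductSpace.toDual_apply_apply] at h
  exact h

/-- Gradient inequality for a convex function. -/
lemma aux_convex_grad_ineq (f : E → ℝ) (f' : E → E)
    (hgrad : ∀ x, HasGradientAt f (f' x) x) (hconv : ConvexOn ℝ Set.univ f)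
    (a b : E) : f a + ⟪f' a, b - a⟫ ≤ f b := by
  set v := b - a
  set g : ℝ → ℝ := fun s => f (a + s • v) with hg
  have hgconv : ConvexOn ℝ Set.univ g := by
    have h := hconv.comp_affineMap (AffineMap.lineMap a b : ℝ →ᵃ[ℝ] E)
    have he : g = f ∘ (AffineMap.lineMap a b : ℝ →ᵃ[ℝ] E) := by
      funext s
      simp [hg, Function.comp, AffineMap.lineMap_apply, v, add_comm]
    rw [he]
    simpa using h
  have hd : HasDerivAt g ⟪f' a, v⟫ 0 := by
    simpa using aux_line_hasDerivAt f f' hgrad a v 0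
  have := hgconv.le_slope_of_hasDerivAt (Set.mem_univ (0:ℝ)) (Set.mem_univ (1:ℝ))
    one_pos hd
  have hs : slope g 0 1 = f b - f a := by
    simp [slope_def_field, hg, v]
  rw [hs] at this
  linarith

/-- Descent lemma: quadratic upper bound from a Lipschitz gradient. -/
lemma aux_descent (f : E → ℝ) (f' : E → E) (L : ℝ) (hL : 0 < L)
    (hgrad : ∀ x, HasGradientAt f (f' x) x)
    (hlip : ∀ x y, ‖f' x - f' y‖ ≤ L * ‖x - y‖)
    (a b : E) : f b ≤ f a + ⟪f' a, b - a⟫ + L / 2 * ‖b - a‖ ^ 2 := by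
  set v := b - a
  set φ : ℝ → ℝ := fun t =>
    f a + t * ⟪f' a, v⟫ + L / 2 * t ^ 2 * ‖v‖ ^ 2 - f (a + t • v) with hφ
  have hder : ∀ t : ℝ, HasDerivAt φ
      (⟪f' a, v⟫ + L * t * ‖v‖ ^ 2 - ⟪f' (a + t • v), v⟫) t := by
    intro t
    have h1 : HasDerivAt (fun t : ℝ => f a + t * ⟪f' a, v⟫ + L / 2 * t ^ 2 * ‖v‖ ^ 2)
        (⟪f' a, v⟫ + L * t * ‖v‖ ^ 2) t := by
      have ha : HasDerivAt (fun t : ℝ => t * ⟪f' a, v⟫) ⟪f' a, v⟫ t := by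
        simpa using (hasDerivAt_id t).mul_const ⟪f' a, v⟫
      have hb : HasDerivAt (fun t : ℝ => L / 2 * t ^ 2 * ‖v‖ ^ 2)
          (L * t * ‖v‖ ^ 2) t := by
        have h := ((hasDerivAt_pow 2 t).const_mul (L / 2)).mul_const (‖v‖ ^ 2)
        convert h using 1
        · rfl
        · rfl
        push_cast
        ring
      have h3 := (ha.const_add (f a)).add hb
      exact h3
    have h4 := h1.sub (aux_line_hasDerivAt f f' hgrad a v t)
    exact h4
  have hmono : MonotoneOn φ (Set.Icc (0:ℝ) 1) := by
    apply monotoneOn_of_deriv_nonneg (convex_Icc 0 1)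
    · exact fun t _ => (hder t).continuousAt.continuousWithinAt
    · intro t _
      exact ((hder t).differentiableAt).differentiableWithinAt
    · intro t ht
      rw [interior_Icc] at ht
      rw [(hder t).deriv]
      have h2 : ⟪f' (a + t • v) - f' a, v⟫ ≤ L * t * ‖v‖ ^ 2 := by
        calc ⟪f' (a + t • v) - f' a, v⟫ ≤ ‖f' (a + t • v) - f' a‖ * ‖v‖ :=
              real_inner_le_norm _ _
          _ ≤ L * ‖(a + t • v) - a‖ * ‖v‖ := by
              have := hlip (a + t • v) a
              have hv : (0:ℝ) ≤ ‖v‖ := norm_nonneg _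
              nlinarith [norm_nonneg (f' (a + t • v) - f' a)]
          _ = L * t * ‖v‖ ^ 2 := by
              rw [add_sub_cancel_left, norm_smul]
              simp [abs_of_pos ht.1]
              ring
      rw [inner_sub_left] at h2
      linarith
  have h01 : φ 0 ≤ φ 1 := hmono (Set.mem_Icc.2 ⟨le_refl 0, zero_le_one⟩)
    (Set.mem_Icc.2 ⟨zero_le_one, le_refl 1⟩) zero_le_one
  have h0 : φ 0 = 0 := by simp [hφ]
  have h1 : φ 1 = f a + ⟪f' a, v⟫ + L / 2 * ‖v‖ ^ 2 - f b := by
    simp [hφ, v]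
  rw [h0, h1] at h01
  linarith

/-- Key one-sided co-coercivity estimate. -/
lemma aux_key (f : E → ℝ) (f' : E → E) (L : ℝ) (hL : 0 < L)
    (hgrad : ∀ x, HasGradientAt f (f' x) x)
    (hlip : ∀ x y, ‖f' x - f' y‖ ≤ L * ‖x - y‖)
    (hconv : ConvexOn ℝ Set.univ f)
    (x y : E) :
    f x + ⟪f' x, y - x⟫ + 1 / (2 * L) * ‖f' y - f' x‖ ^ 2 ≤ f y := by
  set g := f' y - f' x with hgdef
  set z := y - L⁻¹ • g with hz
  have hB := aux_convex_grad_ineq f f' hgrad hconv x z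
  have hA := aux_descent f f' L hL hgrad hlip y z
  have e1 : z - y = -(L⁻¹ • g) := by rw [hz]; abel
  have e2 : ⟪f' y, z - y⟫ = -(L⁻¹ * ⟪f' y, g⟫) := by
    rw [e1, inner_neg_right, real_inner_smul_right]
  have e3 : ‖z - y‖ ^ 2 = L⁻¹ ^ 2 * ‖g‖ ^ 2 := by
    rw [e1, norm_neg, norm_smul, Real.norm_eq_abs, abs_of_pos (inv_pos.2 hL)]
    ring
  have e4 : ⟪f' x, z - x⟫ = ⟪f' x, y - x⟫ - L⁻¹ * ⟪f' x, g⟫ := by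
    have : z - x = (y - x) - L⁻¹ • g := by rw [hz]; abel
    rw [this, inner_sub_right, real_inner_smul_right]
  have e5 : ⟪f' y, g⟫ - ⟪f' x, g⟫ = ‖g‖ ^ 2 := by
    rw [hgdef, ← inner_sub_left, real_inner_self_eq_norm_sq]
  rw [e2, e3] at hA
  rw [e4] at hB
  have hLne : L ≠ 0 := ne_of_gt hL
  have key : L / 2 * (L⁻¹ ^ 2 * ‖g‖ ^ 2) = 1 / (2 * L) * ‖g‖ ^ 2 := by
    field_simp
  rw [key] at hA
  have hinv : L⁻¹ * ⟪f' y, g⟫ - L⁻¹ * ⟪f' x, g⟫ = L⁻¹ * ‖g‖ ^ 2 := by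
    rw [← mul_sub, e5]
  have hinv2 : L⁻¹ * ‖g‖ ^ 2 - 1 / (2 * L) * ‖g‖ ^ 2 = 1 / (2 * L) * ‖g‖ ^ 2 := by
    field_simp
    ring
  linarith

end Aux

/-- Co-coercivity and Lipschitz bound for the gradient of a convex function with
`L`-Lipschitz continuous gradient. -/
theorem cocoercivity_of_lipschitz_gradient (m : ℕ)
    (f : EuclideanSpace ℝ (Fin m) → ℝ) (f' : EuclideanSpace ℝ (Fin m) → EuclideanSpace ℝ (Fin m))
    (L : ℝ) (hL : 0 < L)
    (hgrad : ∀ x, HasGradientAt f (f' x) x)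
    (hlip : ∀ x y, ‖f' x - f' y‖ ≤ L * ‖x - y‖)
    (hconv : ConvexOn ℝ Set.univ f) :
    ∀ x y : EuclideanSpace ℝ (Fin m),
      (1 / L) * ‖f' x - f' y‖ ^ 2 ≤ ⟪f' x - f' y, x - y⟫ ∧
      ⟪f' x - f' y, x - y⟫ ≤ L * ‖x - y‖ ^ 2 := by
  intro x y
  constructor
  · have h1 := aux_key f f' L hL hgrad hlip hconv x y
    have h2 := aux_key f f' L hL hgrad hlip hconv y x
    have hnorm : ‖f' x - f' y‖ = ‖f' y - f' x‖ := by
      rw [← norm_neg]; congr 1; abel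
    have hsum : ⟪f' x - f' y, x - y⟫ = -(⟪f' x, y - x⟫ + ⟪f' y, x - y⟫) := by
      rw [inner_sub_left, show y - x = -(x - y) from by abel, inner_neg_right]
      ring
    have hhalf : 1 / (2 * L) * ‖f' y - f' x‖ ^ 2 + 1 / (2 * L) * ‖f' x - f' y‖ ^ 2
        = 1 / L * ‖f' x - f' y‖ ^ 2 := by
      rw [← hnorm]
      field_simp
      ring
    rw [hsum]
    linarith
  · calc ⟪f' x - f' y, x - y⟫ ≤ ‖f' x - f' y‖ * ‖x - y‖ := real_inner_le_norm _ _
      _ ≤ (L * ‖x - y‖) * ‖x - y‖ := by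
          have := hlip x y
          have := norm_nonneg (x - y)
          nlinarith
      _ = L * ‖x - y‖ ^ 2 := by ring
end

section
/- Let f be convex and differentiable with L-Lipschitz gradient, h convex, and x* a minimizer of P = f + h. For η ∈ (0, 1/L] and any x, g ∈ ℝ^m, let x' = Prox_{η,h}(x - η g). Then -(P(x') - P(x*)) ≥ ⟨∇f(x) - g, x* - x'⟩ + (1/η)⟨x - x', x* - x⟩ + (1/(2η))‖x - x'‖². -/
open scoped RealInnerProductSpace
open Set Filter Topology

section Aux
variable {F : Type*} [NormedAddCommGroup F] [InnerProductSpace ℝ F] [CompleteSpace F]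

lemma line_hasDerivAt (f : F → ℝ) (p x v : F) (t : ℝ)
    (hf : HasGradientAt f p (x + t • v)) :
    HasDerivAt (fun s : ℝ => f (x + s • v)) ⟪p, v⟫ t := by
  have hline : HasDerivAt (fun s : ℝ => x + s • v) v t := by
    simpa using ((hasDerivAt_id t).smul_const v).const_add x
  have := (hasGradientAt_iff_hasFDerivAt.mp hf).comp_hasDerivAt t hline
  exact this

lemma convex_grad_ineq (f : F → ℝ) (p x y : F)
    (hf : HasGradientAt f p x) (hconv : ConvexOn ℝ Set.univ f) :
    f x + ⟪p, y - x⟫ ≤ f y := by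
  have hd : HasDerivAt (fun s : ℝ => f (x + s • (y - x))) ⟪p, y - x⟫ 0 := by
    apply line_hasDerivAt
    simpa using hf
  have hslope : Tendsto (slope (fun s : ℝ => f (x + s • (y - x))) 0) (𝓝[>] 0)
      (𝓝 ⟪p, y - x⟫) :=
    (hasDerivAt_iff_tendsto_slope.mp hd).mono_left
      (nhdsWithin_mono _ (fun t ht => ne_of_gt ht))
  have hev : ∀ᶠ t in 𝓝[>] (0:ℝ),
      slope (fun s : ℝ => f (x + s • (y - x))) 0 t ≤ f y - f x := by
    filter_upwards [Ioo_mem_nhdsGT_of_mem (by norm_num : (0:ℝ) ∈ Ico 0 1)] with t ht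
    have ht0 : 0 < t := ht.1
    have ht1 : t < 1 := ht.2
    have hc := hconv.2 (mem_univ x) (mem_univ y) (by linarith : (0:ℝ) ≤ 1 - t)
      (le_of_lt ht0) (by ring)
    have heq : x + t • (y - x) = (1 - t) • x + t • y := by
      simp [smul_sub, sub_smul]; abel
    rw [slope_def_field]
    have h2 : f (x + t • (y - x)) ≤ (1 - t) * f x + t * f y := by rw [heq]; exact hc
    simp only [zero_smul, add_zero, sub_zero]
    rw [div_le_iff₀ ht0]
    nlinarith
  have := le_of_tendsto hslope hev
  linarith

lemma descent_lemma (f : F → ℝ) (f' : F → F) (L : ℝ) (hL : 0 ≤ L)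
    (hgrad : ∀ z, HasGradientAt f (f' z) z)
    (hlip : ∀ z w, ‖f' z - f' w‖ ≤ L * ‖z - w‖) (x y : F) :
    f y ≤ f x + ⟪f' x, y - x⟫ + L / 2 * ‖y - x‖ ^ 2 := by
  set v := y - x with hv
  set ψ : ℝ → ℝ := fun t => L / 2 * ‖v‖ ^ 2 * t ^ 2 + ⟪f' x, v⟫ * t + f x - f (x + t • v)
    with hψdef
  have hψ : ∀ t : ℝ, HasDerivAt ψ
      (L / 2 * ‖v‖ ^ 2 * (2 * t) + ⟪f' x, v⟫ - ⟪f' (x + t • v), v⟫) t := by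
    intro t
    have h1 : HasDerivAt (fun t : ℝ => L / 2 * ‖v‖ ^ 2 * t ^ 2)
        (L / 2 * ‖v‖ ^ 2 * (2 * t)) t := by
      simpa using (hasDerivAt_pow 2 t).const_mul (L / 2 * ‖v‖ ^ 2)
    have h2 : HasDerivAt (fun t : ℝ => ⟪f' x, v⟫ * t) ⟪f' x, v⟫ t := by
      simpa using (hasDerivAt_id t).const_mul (⟪f' x, v⟫ : ℝ)
    have h3 := line_hasDerivAt f (f' (x + t • v)) x v t (hgrad _)
    exact ((h1.add h2).add_const (f x)).sub h3
  have hdiff : Differentiable ℝ ψ := fun t => (hψ t).differentiableAt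
  have hmono : MonotoneOn ψ (Icc (0:ℝ) 1) := by
    apply monotoneOn_of_deriv_nonneg (convex_Icc 0 1) hdiff.continuous.continuousOn
      hdiff.differentiableOn
    intro t ht
    rw [interior_Icc] at ht
    rw [(hψ t).deriv]
    have hb : ⟪f' (x + t • v), v⟫ - ⟪f' x, v⟫ ≤ L * t * ‖v‖ ^ 2 := by
      have h1 : ⟪f' (x + t • v) - f' x, v⟫ ≤ ‖f' (x + t • v) - f' x‖ * ‖v‖ :=
        real_inner_le_norm _ _
      have h2 : ‖f' (x + t • v) - f' x‖ ≤ L * (t * ‖v‖) := by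
        have := hlip (x + t • v) x
        simpa [norm_smul, abs_of_pos ht.1] using this
      have h3 : ‖f' (x + t • v) - f' x‖ * ‖v‖ ≤ L * (t * ‖v‖) * ‖v‖ :=
        mul_le_mul_of_nonneg_right h2 (norm_nonneg _)
      rw [inner_sub_left] at h1
      nlinarith
    nlinarith
  have h01 := hmono (by norm_num : (0:ℝ) ∈ Icc (0:ℝ) 1)
    (by norm_num : (1:ℝ) ∈ Icc (0:ℝ) 1) zero_le_one
  have hψ0 : ψ 0 = 0 := by simp [hψdef]
  have hψ1 : ψ 1 = L / 2 * ‖v‖ ^ 2 + ⟪f' x, v⟫ + f x - f y := by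
    simp [hψdef, hv]
  rw [hψ0, hψ1] at h01
  linarith

lemma prox_subgrad (h : F → ℝ) (hconv : ConvexOn ℝ Set.univ h)
    (η : ℝ) (hη : 0 < η) (z x' : F)
    (hprox : IsMinOn (fun y => ‖y - z‖ ^ 2 / (2 * η) + h y) Set.univ x') (y : F) :
    h x' + (1 / η) * ⟪z - x', y - x'⟫ ≤ h y := by
  set a := x' - z with ha
  set b := y - x' with hb
  have hzx : ⟪z - x', y - x'⟫ = -⟪a, b⟫ := by
    rw [ha, hb, ← inner_neg_left]; norm_num
  rw [hzx]
  set c : ℝ := ⟪a, b⟫ / η + (h y - h x') with hc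
  suffices hsc : 0 ≤ c by
    rw [hc] at hsc
    have heq2 : (1/η) * -⟪a,b⟫ = -(⟪a,b⟫/η) := by ring
    linarith [hsc, heq2]
  have htend : Tendsto (fun t : ℝ => c + t * (‖b‖ ^ 2 / (2 * η))) (𝓝[>] 0) (𝓝 c) := by
    have : Continuous (fun t : ℝ => c + t * (‖b‖ ^ 2 / (2 * η))) := by continuity
    have h2 := (this.tendsto 0).mono_left (nhdsWithin_le_nhds (s := Ioi (0:ℝ)))
    simpa using h2
  have hev : ∀ᶠ t in 𝓝[>] (0:ℝ), 0 ≤ c + t * (‖b‖ ^ 2 / (2 * η)) := by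
    filter_upwards [Ioo_mem_nhdsGT_of_mem (by norm_num : (0:ℝ) ∈ Ico 0 1)] with t ht
    have ht0 : 0 < t := ht.1
    have ht1 : t < 1 := ht.2
    have key := isMinOn_iff.mp hprox (x' + t • b) (mem_univ _)
    have hnorm : ‖x' + t • b - z‖ ^ 2 = ‖a‖ ^ 2 + 2 * (t * ⟪a, b⟫) + t ^ 2 * ‖b‖ ^ 2 := by
      have : x' + t • b - z = a + t • b := by rw [ha]; abel
      rw [this, norm_add_sq_real, real_inner_smul_right, norm_smul]
      rw [Real.norm_eq_abs, abs_of_pos ht0]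
      ring
    have hcvx : h (x' + t • b) ≤ (1 - t) * h x' + t * h y := by
      have heq : x' + t • b = (1 - t) • x' + t • y := by
        rw [hb]; simp [smul_sub, sub_smul]; abel
      rw [heq]
      exact hconv.2 (mem_univ x') (mem_univ y) (by linarith) (le_of_lt ht0) (by ring)
    have hz : x' - z = a := ha.symm
    rw [hz] at key
    rw [hnorm] at key
    have hη2 : (0:ℝ) < 2 * η := by linarith
    have hD : 0 ≤ (2 * (t * ⟪a, b⟫) + t ^ 2 * ‖b‖ ^ 2) / (2 * η) + t * (h y - h x') := by
      have expand : (‖a‖ ^ 2 + 2 * (t * ⟪a, b⟫) + t ^ 2 * ‖b‖ ^ 2) / (2 * η)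
          = ‖a‖ ^ 2 / (2 * η) + (2 * (t * ⟪a, b⟫) + t ^ 2 * ‖b‖ ^ 2) / (2 * η) := by
        ring
      rw [expand] at key
      linarith
    have hfact : (2 * (t * ⟪a, b⟫) + t ^ 2 * ‖b‖ ^ 2) / (2 * η) + t * (h y - h x')
        = t * (⟪a, b⟫ / η + (h y - h x') + t * (‖b‖ ^ 2 / (2 * η))) := by
      field_simp
      ring
    rw [hfact] at hD
    have hfin := (mul_nonneg_iff_of_pos_left ht0).mp hD
    rw [hc]
    linarith [hfin]
  exact ge_of_tendsto htend hev
end Aux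

/-- The key descent inequality for one proximal-gradient step with an arbitrary
gradient estimate `g` (inequality (ineqn:t1) in the paper's appendix). -/
theorem prox_grad_descent_inequality (m : ℕ)
    (f h : EuclideanSpace ℝ (Fin m) → ℝ)
    (f' : EuclideanSpace ℝ (Fin m) → EuclideanSpace ℝ (Fin m))
    (L : ℝ) (hL : 0 < L)
    (hgrad : ∀ z, HasGradientAt f (f' z) z)
    (hlip : ∀ z w, ‖f' z - f' w‖ ≤ L * ‖z - w‖)
    (hfconv : ConvexOn ℝ Set.univ f)
    (hhconv : ConvexOn ℝ Set.univ h)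
    (xs : EuclideanSpace ℝ (Fin m))
    (hmin : IsMinOn (fun z => f z + h z) Set.univ xs)
    (eta : ℝ) (heta : 0 < eta) (hetaL : eta ≤ 1 / L)
    (x g x' : EuclideanSpace ℝ (Fin m))
    (hprox : IsMinOn (fun y => ‖y - (x - eta • g)‖ ^ 2 / (2 * eta) + h y) Set.univ x') :
    ⟪f' x - g, xs - x'⟫ + (1 / eta) * ⟪x - x', xs - x⟫
        + (1 / (2 * eta)) * ‖x - x'‖ ^ 2
      ≤ -((f x' + h x') - (f xs + h xs)) := by
  have hml : eta * L ≤ 1 := by rwa [le_div_iff₀ hL] at hetaL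
  -- descent lemma
  have hdes := descent_lemma f f' L (le_of_lt hL) hgrad hlip x x'
  -- convexity of f
  have hcvx := convex_grad_ineq f (f' x) x xs (hgrad x) hfconv
  -- prox subgradient
  have hps := prox_subgrad h hhconv eta heta (x - eta • g) x' hprox xs
  -- inner product identities
  have e1 : ⟪(x - eta • g) - x', xs - x'⟫
      = ⟪x - x', xs - x⟫ + ‖x - x'‖ ^ 2 - eta * ⟪g, xs - x'⟫ := by
    have : (x - eta • g) - x' = (x - x') - eta • g := by abel
    rw [this, inner_sub_left, real_inner_smul_left]
    have h2 : (xs - x' : EuclideanSpace ℝ (Fin m)) = (xs - x) + (x - x') := by abel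
    rw [h2, inner_add_right, inner_add_right, real_inner_self_eq_norm_sq]
  have e2 : ⟪f' x - g, xs - x'⟫ = ⟪f' x, xs - x⟫ - ⟪f' x, x' - x⟫ - ⟪g, xs - x'⟫ := by
    rw [inner_sub_left]
    have h2 : (xs - x' : EuclideanSpace ℝ (Fin m)) = (xs - x) - (x' - x) := by abel
    rw [h2, inner_sub_right]
  have e3 : ‖x' - x‖ = ‖x - x'‖ := norm_sub_rev _ _
  rw [e3] at hdes
  rw [e1] at hps
  rw [e2]
  have hN : (0:ℝ) ≤ ‖x - x'‖ ^ 2 := sq_nonneg _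
  have hdes2 : f x' ≤ f x + ⟪f' x, x' - x⟫ + 1 / (2 * eta) * ‖x - x'‖ ^ 2 := by
    have : L / 2 * ‖x - x'‖ ^ 2 ≤ 1 / (2 * eta) * ‖x - x'‖ ^ 2 := by
      apply mul_le_mul_of_nonneg_right _ hN
      rw [div_le_div_iff₀ (by norm_num) (by linarith)]
      nlinarith [hml]
    linarith
  have hps2 : h x' + (1/eta) * ⟪x - x', xs - x⟫ + (1/eta) * ‖x - x'‖ ^ 2
      - ⟪g, xs - x'⟫ ≤ h xs := by
    have heq : (1/eta) * (⟪x - x', xs - x⟫ + ‖x - x'‖ ^ 2 - eta * ⟪g, xs - x'⟫)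
        = (1/eta) * ⟪x - x', xs - x⟫ + (1/eta) * ‖x - x'‖ ^ 2 - ⟪g, xs - x'⟫ := by
      field_simp
    rw [heq] at hps
    linarith
  have hhalf : (1/eta) * ‖x - x'‖ ^ 2 = 2 * ((1/(2*eta)) * ‖x - x'‖ ^ 2) := by
    field_simp
  linarith
end

section
/- Let (a_t)_{t≥0} be nonnegative reals satisfying, with step-sizes η_t = 1/(μ(t+1) + u) for constants μ > 0 and u large enough that η_t ≤ μ/(4C₁τ) for all t: a_{t+1} ≤ (1 - μη_t)a_t + C₁ Σ_{p=0}^{2τ} η_{t-p}² a_{t-p} + C₂η_t² (terms with negative index treated as a_0), where C₁, C₂ ≥ 0 and τ ∈ ℕ. Then there exists a constant K (depending on a_0, μ, u, τ, C₁, C₂) such that a_T ≤ K·(1 + log T)/(μT + u) for all T ≥ 1; in particular a_T = O(log T / T). -/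
open scoped BigOperators

lemma aux_shift_sum (f : ℕ → ℝ) (hf : ∀ s, 0 ≤ f s) (p T : ℕ) :
    ∑ t ∈ Finset.range T, f (t - p) ≤ p * f 0 + ∑ s ∈ Finset.range T, f s := by
  induction p generalizing T with
  | zero => simp
  | succ p ih =>
    cases T with
    | zero =>
      simp only [Finset.range_zero, Finset.sum_empty, add_zero]
      have := hf 0
      positivity
    | succ T =>
      rw [Finset.sum_range_succ' (fun t => f (t - (p + 1))) T]
      simp only [Nat.succ_sub_succ, Nat.zero_sub]
      have h1 := ih T
      have h2 := hf T
      rw [Finset.sum_range_succ (fun s => f s) T]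
      push_cast
      linarith

lemma aux_sq_sum (T : ℕ) : ∑ t ∈ Finset.range T, (1 / ((t : ℝ) + 1)) ^ 2 ≤ 2 := by
  have key : ∀ n : ℕ, ∑ t ∈ Finset.range (n + 1), (1 / ((t : ℝ) + 1)) ^ 2
      ≤ 2 - 1 / ((n : ℝ) + 1) := by
    intro n
    induction n with
    | zero => norm_num
    | succ n ih =>
      rw [Finset.sum_range_succ]
      have h1 : (0:ℝ) < (n:ℝ) + 1 := by positivity
      have h2 : (0:ℝ) < (n:ℝ) + 2 := by positivity
      have h3 : (1 / (((n:ℕ):ℝ) + 1 + 1)) ^ 2 ≤ 1 / ((n:ℝ)+1) - 1 / ((n:ℝ)+1+1) := by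
        have h22 : ((n:ℝ)+1+1) = (n:ℝ)+2 := by ring
        rw [h22]
        rw [div_sub_div _ _ (ne_of_gt h1) (ne_of_gt h2), div_pow, one_pow,
          div_le_div_iff₀ (by positivity) (by positivity)]
        nlinarith
      push_cast at h3 ⊢
      linarith
  cases T with
  | zero => simp
  | succ n =>
    have h := key n
    have h4 : (0:ℝ) ≤ 1 / ((n:ℝ)+1) := by positivity
    linarith

lemma aux_harmonic (T : ℕ) : ∑ t ∈ Finset.range T, (1 / ((t : ℝ) + 1)) ≤ 1 + Real.log T := by
  have h := harmonic_le_one_add_log T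
  have he : ((harmonic T : ℚ) : ℝ) = ∑ t ∈ Finset.range T, (1 / ((t : ℝ) + 1)) := by
    rw [harmonic]
    push_cast
    simp [one_div]
  linarith [he ▸ h]

set_option maxHeartbeats 1000000 in
/-- Deterministic sequence lemma underlying Theorem 1 (diminishing step-size,
`O(log T / T)` rate). Negative indices are clamped (natural subtraction),
i.e. treated as the index `0`. -/
theorem diminishing_stepsize_recursion (a : ℕ → ℝ) (ha : ∀ t, 0 ≤ a t)
    (μ u C₁ C₂ : ℝ) (τ : ℕ)
    (hμ : 0 < μ) (hu : 0 < u) (hC₁ : 0 ≤ C₁) (hC₂ : 0 ≤ C₂)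
    (η : ℕ → ℝ) (hη : ∀ t, η t = 1 / (μ * (t + 1) + u))
    (hsmall : ∀ t, η t ≤ μ / (4 * C₁ * τ))
    (hrec : ∀ t, a (t + 1) ≤ (1 - μ * η t) * a t
      + C₁ * ∑ p ∈ Finset.range (2 * τ + 1), (η (t - p)) ^ 2 * a (t - p)
      + C₂ * (η t) ^ 2) :
    ∃ K : ℝ, ∀ T : ℕ, 1 ≤ T →
      a T ≤ K * (1 + Real.log T) / (μ * T + u) := by
  -- basic positivity facts
  have hw : ∀ t : ℕ, (0:ℝ) < μ * t + u := fun t => by positivity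
  have hηpos : ∀ t, 0 < η t := by
    intro t; rw [hη]; positivity
  have hηu : ∀ t, η t ≤ 1 / u := by
    intro t; rw [hη]
    apply one_div_le_one_div_of_le hu
    nlinarith [Nat.cast_nonneg (α := ℝ) t]
  -- from hsmall, C₁ > 0 and τ ≥ 1
  have hd : (0:ℝ) < 4 * C₁ * τ := by
    have hc := (hηpos 0).trans_le (hsmall 0)
    rcases lt_trichotomy (4 * C₁ * (τ:ℝ)) 0 with h | h | h
    · exact absurd (div_neg_of_pos_of_neg hμ h) (by linarith)
    · rw [h, div_zero] at hc; exact absurd hc (lt_irrefl 0)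
    · exact h
  have hC₁pos : 0 < C₁ := by nlinarith [Nat.cast_nonneg (α := ℝ) τ]
  have hτpos : (0:ℝ) < τ := by nlinarith
  have hτ1 : (1:ℝ) ≤ τ := by
    have h0 : 0 < τ := by exact_mod_cast hτpos
    exact_mod_cast h0
  -- key product identity
  have hwη : ∀ t : ℕ, (μ * ((t:ℝ) + 1) + u) * η t = 1 := by
    intro t
    rw [hη]
    field_simp
  -- per-term absorption: C₁ η² a ≤ (μ/(4τ)) η a
  have hgf : ∀ s, C₁ * (η s ^ 2 * a s) ≤ μ / (4 * τ) * (η s * a s) := by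
    intro s
    have h1 : C₁ * η s ≤ μ / (4 * τ) := by
      calc C₁ * η s ≤ C₁ * (μ / (4 * C₁ * τ)) :=
            mul_le_mul_of_nonneg_left (hsmall s) hC₁
        _ = μ / (4 * τ) := by
            field_simp
    calc C₁ * (η s ^ 2 * a s) = (C₁ * η s) * (η s * a s) := by ring
      _ ≤ μ / (4 * τ) * (η s * a s) := by
          apply mul_le_mul_of_nonneg_right h1
          exact mul_nonneg (hηpos s).le (ha s)
  -- claim1: summed recursion
  have claim1 : ∀ T, a T + μ * (∑ t ∈ Finset.range T, η t * a t)
      ≤ a 0 + C₁ * (∑ t ∈ Finset.range T, ∑ p ∈ Finset.range (2 * τ + 1),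
          η (t - p) ^ 2 * a (t - p))
        + C₂ * (∑ t ∈ Finset.range T, η t ^ 2) := by
    intro T
    induction T with
    | zero => simp
    | succ T ih =>
      have hr := hrec T
      have hexp : (1 - μ * η T) * a T = a T - μ * (η T * a T) := by ring
      rw [hexp] at hr
      rw [Finset.sum_range_succ (fun t => η t * a t) T,
        Finset.sum_range_succ (fun t => ∑ p ∈ Finset.range (2 * τ + 1),
          η (t - p) ^ 2 * a (t - p)) T,
        Finset.sum_range_succ (fun t => η t ^ 2) T]
      linarith
  -- bound on Σ η_t²
  have hQ : ∀ T, ∑ t ∈ Finset.range T, η t ^ 2 ≤ 2 / μ ^ 2 := by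
    intro T
    calc ∑ t ∈ Finset.range T, η t ^ 2
        ≤ ∑ t ∈ Finset.range T, (1 / μ) ^ 2 * (1 / ((t:ℝ) + 1)) ^ 2 := by
          apply Finset.sum_le_sum
          intro t _
          have h1 : η t ≤ (1 / μ) * (1 / ((t:ℝ) + 1)) := by
            rw [hη, div_mul_div_comm, one_mul]
            apply one_div_le_one_div_of_le (by positivity)
            nlinarith
          calc η t ^ 2 ≤ ((1 / μ) * (1 / ((t:ℝ) + 1))) ^ 2 := by
                apply pow_le_pow_left₀ (hηpos t).le h1
            _ = (1 / μ) ^ 2 * (1 / ((t:ℝ) + 1)) ^ 2 := by ring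
      _ = (1 / μ) ^ 2 * ∑ t ∈ Finset.range T, (1 / ((t:ℝ) + 1)) ^ 2 := by
          rw [Finset.mul_sum]
      _ ≤ (1 / μ) ^ 2 * 2 :=
          mul_le_mul_of_nonneg_left (aux_sq_sum T) (by positivity)
      _ = 2 / μ ^ 2 := by field_simp
  -- uniform bound on S = Σ η_t a_t
  have hS : ∀ T, ∑ t ∈ Finset.range T, η t * a t
      ≤ 4 * (a 0 + C₁ * (2 * (τ:ℝ) + 1) * (2 * τ) * (η 0 ^ 2 * a 0) + 2 * C₂ / μ ^ 2) / μ := by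
    intro T
    have hSnn : 0 ≤ ∑ t ∈ Finset.range T, η t * a t :=
      Finset.sum_nonneg fun t _ => mul_nonneg (hηpos t).le (ha t)
    have hgnn : ∀ s, 0 ≤ η s ^ 2 * a s := fun s => mul_nonneg (sq_nonneg _) (ha s)
    have hD : C₁ * (∑ t ∈ Finset.range T, ∑ p ∈ Finset.range (2 * τ + 1),
        η (t - p) ^ 2 * a (t - p))
        ≤ C₁ * (2 * (τ:ℝ) + 1) * (2 * τ) * (η 0 ^ 2 * a 0)
          + 3 * μ / 4 * (∑ t ∈ Finset.range T, η t * a t) := by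
      have hper : ∀ p ∈ Finset.range (2 * τ + 1),
          ∑ t ∈ Finset.range T, η (t - p) ^ 2 * a (t - p)
          ≤ (2 * (τ:ℝ)) * (η 0 ^ 2 * a 0) + ∑ s ∈ Finset.range T, η s ^ 2 * a s := by
        intro p hp
        have hple : (p:ℝ) ≤ 2 * (τ:ℝ) := by
          have h0 := Nat.lt_succ_iff.mp (Finset.mem_range.mp hp)
          exact_mod_cast h0
        have h1 := aux_shift_sum (fun s => η s ^ 2 * a s) hgnn p T
        have h2 : (p:ℝ) * (η 0 ^ 2 * a 0) ≤ (2 * (τ:ℝ)) * (η 0 ^ 2 * a 0) :=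
          mul_le_mul_of_nonneg_right hple (hgnn 0)
        linarith
      have hDsum : (∑ t ∈ Finset.range T, ∑ p ∈ Finset.range (2 * τ + 1),
          η (t - p) ^ 2 * a (t - p))
          ≤ (2 * (τ:ℝ) + 1) * ((2 * (τ:ℝ)) * (η 0 ^ 2 * a 0)
            + ∑ s ∈ Finset.range T, η s ^ 2 * a s) := by
        rw [Finset.sum_comm]
        calc (∑ p ∈ Finset.range (2 * τ + 1), ∑ t ∈ Finset.range T,
              η (t - p) ^ 2 * a (t - p))
            ≤ ∑ _p ∈ Finset.range (2 * τ + 1), ((2 * (τ:ℝ)) * (η 0 ^ 2 * a 0)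
              + ∑ s ∈ Finset.range T, η s ^ 2 * a s) := Finset.sum_le_sum hper
          _ = (2 * (τ:ℝ) + 1) * ((2 * (τ:ℝ)) * (η 0 ^ 2 * a 0)
              + ∑ s ∈ Finset.range T, η s ^ 2 * a s) := by
              rw [Finset.sum_const, Finset.card_range]
              push_cast
              ring
      have hCg : C₁ * (∑ s ∈ Finset.range T, η s ^ 2 * a s)
          ≤ μ / (4 * τ) * (∑ s ∈ Finset.range T, η s * a s) := by
        rw [Finset.mul_sum, Finset.mul_sum]
        exact Finset.sum_le_sum fun s _ => hgf s
      have hcoef : (2 * (τ:ℝ) + 1) * (μ / (4 * τ)) ≤ 3 * μ / 4 := by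
        have he : (2 * (τ:ℝ) + 1) * (μ / (4 * τ)) = μ * (2 * τ + 1) / (4 * τ) := by
          ring
        rw [he, div_le_div_iff₀ (by positivity) (by norm_num)]
        nlinarith
      have s1 : C₁ * (∑ t ∈ Finset.range T, ∑ p ∈ Finset.range (2 * τ + 1),
          η (t - p) ^ 2 * a (t - p))
          ≤ C₁ * ((2 * (τ:ℝ) + 1) * ((2 * (τ:ℝ)) * (η 0 ^ 2 * a 0)
            + ∑ s ∈ Finset.range T, η s ^ 2 * a s)) :=
        mul_le_mul_of_nonneg_left hDsum hC₁
      have s2 : (2 * (τ:ℝ) + 1) * (C₁ * (∑ s ∈ Finset.range T, η s ^ 2 * a s))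
          ≤ (2 * (τ:ℝ) + 1) * (μ / (4 * τ) * (∑ s ∈ Finset.range T, η s * a s)) :=
        mul_le_mul_of_nonneg_left hCg (by positivity)
      have s3 : (2 * (τ:ℝ) + 1) * (μ / (4 * τ)) * (∑ s ∈ Finset.range T, η s * a s)
          ≤ 3 * μ / 4 * (∑ s ∈ Finset.range T, η s * a s) :=
        mul_le_mul_of_nonneg_right hcoef hSnn
      nlinarith [s1, s2, s3]
    have h1 := claim1 T
    have h2 := hQ T
    have h3 := ha T
    have hC₂Q : C₂ * (∑ t ∈ Finset.range T, η t ^ 2) ≤ 2 * C₂ / μ ^ 2 := by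
      calc C₂ * (∑ t ∈ Finset.range T, η t ^ 2) ≤ C₂ * (2 / μ ^ 2) :=
            mul_le_mul_of_nonneg_left h2 hC₂
        _ = 2 * C₂ / μ ^ 2 := by ring
    rw [le_div_iff₀ hμ]
    linarith
  -- weighted recursion: claim2
  set R : ℝ := 1 + 2 * μ * (τ:ℝ) / u with hR_def
  have hRnn : (0:ℝ) ≤ R := by rw [hR_def]; positivity
  have claim2 : ∀ T : ℕ, (μ * T + u) * a T
      ≤ u * a 0
        + C₁ * R * (∑ t ∈ Finset.range T, ∑ p ∈ Finset.range (2 * τ + 1),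
            η (t - p) * a (t - p))
        + C₂ * (∑ t ∈ Finset.range T, η t) := by
    intro T
    induction T with
    | zero => simp
    | succ T ih =>
      have hr := hrec T
      have h0 : (0:ℝ) ≤ μ * ((T:ℝ) + 1) + u := by positivity
      have h1 := mul_le_mul_of_nonneg_left hr h0
      have he : (μ * ((T:ℝ) + 1) + u) * ((1 - μ * η T) * a T
          + C₁ * ∑ p ∈ Finset.range (2 * τ + 1), η (T - p) ^ 2 * a (T - p)
          + C₂ * η T ^ 2)
          = (μ * T + u) * a T
            + C₁ * ((μ * ((T:ℝ) + 1) + u)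
              * ∑ p ∈ Finset.range (2 * τ + 1), η (T - p) ^ 2 * a (T - p))
            + C₂ * η T := by
        linear_combination (C₂ * η T - μ * a T) * (hwη T)
      rw [he] at h1
      -- bound the middle term
      have hterm : ∀ p ∈ Finset.range (2 * τ + 1),
          (μ * ((T:ℝ) + 1) + u) * (η (T - p) ^ 2 * a (T - p))
          ≤ R * (η (T - p) * a (T - p)) := by
        intro p hp
        have hps : T ≤ T - p + 2 * τ := by
          have := Finset.mem_range.mp hp
          omega
        have hTs : ((T:ℝ)) ≤ ((T - p : ℕ) : ℝ) + 2 * τ := by exact_mod_cast hps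
        have hww' : μ * ((T:ℝ) + 1) + u
            ≤ μ * (((T - p : ℕ) : ℝ) + 1) + u + 2 * μ * τ := by nlinarith
        have hbnn : (0:ℝ) ≤ η (T - p) ^ 2 * a (T - p) :=
          mul_nonneg (sq_nonneg _) (ha _)
        have step1 : (μ * ((T:ℝ) + 1) + u) * (η (T - p) ^ 2 * a (T - p))
            ≤ (μ * (((T - p : ℕ) : ℝ) + 1) + u + 2 * μ * τ)
              * (η (T - p) ^ 2 * a (T - p)) :=
          mul_le_mul_of_nonneg_right hww' hbnn
        have step2 : (μ * (((T - p : ℕ) : ℝ) + 1) + u + 2 * μ * τ)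
            * (η (T - p) ^ 2 * a (T - p))
            = η (T - p) * a (T - p)
              + 2 * μ * τ * (η (T - p) * (η (T - p) * a (T - p))) := by
          linear_combination (η (T - p) * a (T - p)) * (hwη (T - p))
        have step3 : 2 * μ * (τ:ℝ) * (η (T - p) * (η (T - p) * a (T - p)))
            ≤ 2 * μ * τ * ((1 / u) * (η (T - p) * a (T - p))) := by
          apply mul_le_mul_of_nonneg_left _ (by positivity)
          exact mul_le_mul_of_nonneg_right (hηu (T - p))
            (mul_nonneg (hηpos _).le (ha _))
        have step4 : η (T - p) * a (T - p)
            + 2 * μ * (τ:ℝ) * ((1 / u) * (η (T - p) * a (T - p)))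
            = R * (η (T - p) * a (T - p)) := by
          rw [hR_def]
          field_simp
        refine step1.trans ?_
        rw [step2, ← step4]
        linarith [step3]
      have hsum : (μ * ((T:ℝ) + 1) + u)
          * ∑ p ∈ Finset.range (2 * τ + 1), η (T - p) ^ 2 * a (T - p)
          ≤ R * ∑ p ∈ Finset.range (2 * τ + 1), η (T - p) * a (T - p) := by
        rw [Finset.mul_sum, Finset.mul_sum]
        exact Finset.sum_le_sum hterm
      have h2 : C₁ * ((μ * ((T:ℝ) + 1) + u)
          * ∑ p ∈ Finset.range (2 * τ + 1), η (T - p) ^ 2 * a (T - p))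
          ≤ C₁ * (R * ∑ p ∈ Finset.range (2 * τ + 1), η (T - p) * a (T - p)) :=
        mul_le_mul_of_nonneg_left hsum hC₁
      rw [Finset.sum_range_succ (fun t => ∑ p ∈ Finset.range (2 * τ + 1),
          η (t - p) * a (t - p)) T,
        Finset.sum_range_succ (fun t => η t) T]
      push_cast
      push_cast at h1
      linarith
  clear_value R
  -- notation for the uniform bound on Σ η a
  set B : ℝ := 4 * (a 0 + C₁ * (2 * (τ:ℝ) + 1) * (2 * (τ:ℝ)) * (η 0 ^ 2 * a 0)
      + 2 * C₂ / μ ^ 2) / μ with hB_def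
  have hBnn : (0:ℝ) ≤ B := by
    rw [hB_def]
    apply div_nonneg _ hμ.le
    have h1 : (0:ℝ) ≤ C₁ * (2 * (τ:ℝ) + 1) * (2 * (τ:ℝ)) * (η 0 ^ 2 * a 0) :=
      mul_nonneg (mul_nonneg (mul_nonneg hC₁ (by positivity)) (by positivity))
        (mul_nonneg (sq_nonneg _) (ha 0))
    have h2 : (0:ℝ) ≤ 2 * C₂ / μ ^ 2 := by positivity
    nlinarith [ha 0]
  clear_value B
  -- bound on the double sum of η a
  have hE : ∀ T, (∑ t ∈ Finset.range T, ∑ p ∈ Finset.range (2 * τ + 1),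
      η (t - p) * a (t - p))
      ≤ (2 * (τ:ℝ) + 1) * (2 * (τ:ℝ) * (η 0 * a 0) + B) := by
    intro T
    have hfnn : ∀ s, 0 ≤ η s * a s := fun s => mul_nonneg (hηpos s).le (ha s)
    rw [Finset.sum_comm]
    calc (∑ p ∈ Finset.range (2 * τ + 1), ∑ t ∈ Finset.range T,
          η (t - p) * a (t - p))
        ≤ ∑ _p ∈ Finset.range (2 * τ + 1),
            (2 * (τ:ℝ) * (η 0 * a 0) + B) := by
          apply Finset.sum_le_sum
          intro p hp
          have hple : (p:ℝ) ≤ 2 * (τ:ℝ) := by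
            have h0 := Nat.lt_succ_iff.mp (Finset.mem_range.mp hp)
            exact_mod_cast h0
          have h1 := aux_shift_sum (fun s => η s * a s) hfnn p T
          have h2 : (p:ℝ) * (η 0 * a 0) ≤ 2 * (τ:ℝ) * (η 0 * a 0) :=
            mul_le_mul_of_nonneg_right hple (hfnn 0)
          have h3 := hS T
          linarith
      _ = (2 * (τ:ℝ) + 1) * (2 * (τ:ℝ) * (η 0 * a 0) + B) := by
          rw [Finset.sum_const, Finset.card_range]
          push_cast
          ring
  -- bound on Σ η_t by harmonic sum
  have hH : ∀ T, ∑ t ∈ Finset.range T, η t ≤ (1 / μ) * (1 + Real.log T) := by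
    intro T
    calc ∑ t ∈ Finset.range T, η t
        ≤ ∑ t ∈ Finset.range T, (1 / μ) * (1 / ((t:ℝ) + 1)) := by
          apply Finset.sum_le_sum
          intro t _
          rw [hη, div_mul_div_comm, one_mul]
          apply one_div_le_one_div_of_le (by positivity)
          nlinarith
      _ = (1 / μ) * ∑ t ∈ Finset.range T, (1 / ((t:ℝ) + 1)) := by
          rw [Finset.mul_sum]
      _ ≤ (1 / μ) * (1 + Real.log T) :=
          mul_le_mul_of_nonneg_left (aux_harmonic T) (by positivity)
  -- put it together
  set C0 : ℝ := u * a 0 + C₁ * R * ((2 * (τ:ℝ) + 1) * (2 * (τ:ℝ) * (η 0 * a 0) + B))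
    with hC0_def
  have hC0nn : (0:ℝ) ≤ C0 := by
    rw [hC0_def]
    have h1 : (0:ℝ) ≤ η 0 * a 0 := mul_nonneg (hηpos 0).le (ha 0)
    have h2 : (0:ℝ) ≤ 2 * (τ:ℝ) * (η 0 * a 0) + B :=
      add_nonneg (mul_nonneg (by positivity) h1) hBnn
    have h3 : (0:ℝ) ≤ C₁ * R := mul_nonneg hC₁ hRnn
    have h4 : (0:ℝ) ≤ (2 * (τ:ℝ) + 1) * (2 * (τ:ℝ) * (η 0 * a 0) + B) :=
      mul_nonneg (by positivity) h2
    linarith [mul_nonneg hu.le (ha 0), mul_nonneg h3 h4]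
  clear_value C0
  refine ⟨C0 + C₂ / μ, ?_⟩
  intro T hT
  have hL : 0 ≤ Real.log T := Real.log_nonneg (by exact_mod_cast hT)
  have hc2 := claim2 T
  have h5 : C₁ * R * (∑ t ∈ Finset.range T, ∑ p ∈ Finset.range (2 * τ + 1),
      η (t - p) * a (t - p))
      ≤ C₁ * R * ((2 * (τ:ℝ) + 1) * (2 * (τ:ℝ) * (η 0 * a 0) + B)) :=
    mul_le_mul_of_nonneg_left (hE T) (mul_nonneg hC₁ hRnn)
  have h6 : C₂ * (∑ t ∈ Finset.range T, η t) ≤ C₂ * ((1 / μ) * (1 + Real.log T)) :=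
    mul_le_mul_of_nonneg_left (hH T) hC₂
  have h7 : (μ * T + u) * a T ≤ C0 + C₂ * ((1 / μ) * (1 + Real.log T)) := by
    rw [hC0_def]
    linarith
  have h8 : C0 + C₂ * ((1 / μ) * (1 + Real.log T))
      ≤ (C0 + C₂ / μ) * (1 + Real.log T) := by
    have hexp : (C0 + C₂ / μ) * (1 + Real.log T)
        = C0 + C₂ * ((1 / μ) * (1 + Real.log T)) + C0 * Real.log T := by
      ring
    rw [hexp]
    nlinarith [mul_nonneg hC0nn hL]
  rw [le_div_iff₀ (hw T)]
  nlinarith [h7, h8]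
end

section
/- Suppose f is μ-strongly convex with L-Lipschitz gradient, h is convex, x* minimizes P = f + h, η ∈ (0, 1/L], and let x' = Prox_{η,h}(x - η g) where g is a random vector with E[g | x] = ∇f(x) and E[‖g - ∇f(x)‖² | x] ≤ C_f. Then E[‖x' - x‖² + 2⟨x' - x, x - x*⟩] ≤ -μη E‖x - x*‖² - 2η E[P(x') - P(x)] + 2η²C_f. -/
open scoped RealInnerProductSpace
open MeasureTheory

section Aux

variable {E : Type*} [NormedAddCommGroup E] [InnerProductSpace ℝ E] [CompleteSpace E]

theorem osc_small_t_limit (c d : ℝ) (hd : 0 ≤ d)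
    (key : ∀ t : ℝ, 0 < t → t ≤ 1 → 0 ≤ c + t * d) : 0 ≤ c := by
  by_contra hneg
  push_neg at hneg
  have ht0 : 0 < min 1 (-c / (2 * (d + 1))) :=
    lt_min one_pos (div_pos (by linarith) (by positivity))
  have h1 := key _ ht0 (min_le_left _ _)
  have h2 : min 1 (-c / (2 * (d + 1))) * d ≤ (-c / (2 * (d + 1))) * d :=
    mul_le_mul_of_nonneg_right (min_le_right _ _) hd
  have h3 : (-c / (2 * (d + 1))) * d < -c := by
    rw [div_mul_eq_mul_div, div_lt_iff₀ (by positivity)]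
    nlinarith
  linarith

theorem osc_descent_lemma (f : E → ℝ) (f' : E → E) (L : ℝ)
    (hgrad : ∀ z, HasGradientAt f (f' z) z)
    (hlip : ∀ z w, ‖f' z - f' w‖ ≤ L * ‖z - w‖) (v w : E) :
    f w ≤ f v + ⟪f' v, w - v⟫ + L / 2 * ‖w - v‖ ^ 2 := by
  set d := w - v with hd
  have hγ : ∀ t : ℝ, HasDerivAt (fun t : ℝ => v + t • d) d t := by
    intro t
    simpa using ((hasDerivAt_id t).smul_const d).const_add v
  have hF : ∀ t : ℝ, HasDerivAt (fun t : ℝ => f (v + t • d)) ⟪f' (v + t • d), d⟫ t := by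
    intro t
    have := ((hgrad (v + t • d)).hasFDerivAt).comp_hasDerivAt t (hγ t)
    simpa [InnerProductSpace.toDual_apply_apply, Function.comp_def] using this
  set φ : ℝ → ℝ := fun t => f (v + t • d) - t * ⟪f' v, d⟫ - L * t ^ 2 / 2 * ‖d‖ ^ 2 with hφ
  have hφd : ∀ t : ℝ, HasDerivAt φ (⟪f' (v + t • d), d⟫ - ⟪f' v, d⟫ - L * t * ‖d‖ ^ 2) t := by
    intro t
    have h1 : HasDerivAt (fun t : ℝ => t * ⟪f' v, d⟫) ⟪f' v, d⟫ t := by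
      simpa using (hasDerivAt_id t).mul_const ⟪f' v, d⟫
    have h2 : HasDerivAt (fun t : ℝ => L * t ^ 2 / 2 * ‖d‖ ^ 2) (L * t * ‖d‖ ^ 2) t := by
      have : HasDerivAt (fun t : ℝ => t ^ 2) (2 * t) t := by
        simpa using hasDerivAt_pow 2 t
      have := ((this.const_mul L).div_const 2).mul_const (‖d‖ ^ 2)
      convert this using 1
      · rfl
      · rfl
      ring
    exact ((hF t).sub h1).sub h2
  have hanti : AntitoneOn φ (Set.Icc (0:ℝ) 1) := by
    apply antitoneOn_of_deriv_nonpos (convex_Icc 0 1)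
    · exact fun t _ => ((hφd t).differentiableAt).continuousAt.continuousWithinAt
    · exact fun t _ => ((hφd t).differentiableAt).differentiableWithinAt
    · intro t ht
      rw [interior_Icc] at ht
      rw [(hφd t).deriv]
      have h3 : ⟪f' (v + t • d), d⟫ - ⟪f' v, d⟫ ≤ L * t * ‖d‖ ^ 2 := by
        rw [← inner_sub_left]
        calc ⟪f' (v + t • d) - f' v, d⟫ ≤ ‖f' (v + t • d) - f' v‖ * ‖d‖ :=
              real_inner_le_norm _ _
          _ ≤ (L * ‖(v + t • d) - v‖) * ‖d‖ := by
              have := hlip (v + t • d) v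
              nlinarith [norm_nonneg (f' (v + t • d) - f' v), norm_nonneg d]
          _ = L * t * ‖d‖ ^ 2 := by
              rw [add_sub_cancel_left, norm_smul, Real.norm_eq_abs, abs_of_pos ht.1]
              ring
      linarith
  have := hanti (Set.mem_Icc.2 ⟨le_refl 0, zero_le_one⟩)
    (Set.mem_Icc.2 ⟨zero_le_one, le_refl 1⟩) zero_le_one
  simp only [hφ, zero_smul, add_zero, one_smul, zero_mul, one_mul, zero_pow, mul_zero,
    sub_zero, one_pow, mul_one] at this
  have hvw : v + d = w := by rw [hd]; abel
  rw [hvw] at this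
  linarith [this]

theorem osc_prox_subgrad (h : E → ℝ) (hh : ConvexOn ℝ Set.univ h) (η : ℝ) (hη : 0 < η)
    (z a : E) (hm : IsMinOn (fun y => ‖y - z‖ ^ 2 / (2 * η) + h y) Set.univ a) (y : E) :
    η * (h a - h y) ≤ ⟪z - a, a - y⟫ := by
  have key : ∀ t : ℝ, 0 < t → t ≤ 1 →
      0 ≤ (⟪a - z, y - a⟫ / η + (h y - h a)) + t * (‖y - a‖ ^ 2 / (2 * η)) := by
    intro t ht0 ht1
    have hmem := hm (Set.mem_univ (a + t • (y - a)))
    simp only [Set.mem_setOf_eq] at hmem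
    have hconv : h (a + t • (y - a)) ≤ (1 - t) * h a + t * h y := by
      have := hh.2 (Set.mem_univ a) (Set.mem_univ y) (by linarith : (0:ℝ) ≤ 1 - t)
        (le_of_lt ht0) (by ring)
      have heq : (1 - t) • a + t • y = a + t • (y - a) := by
        rw [smul_sub, sub_smul, one_smul]; abel
      rw [heq] at this
      simpa using this
    have hnorm : ‖a + t • (y - a) - z‖ ^ 2
        = ‖a - z‖ ^ 2 + 2 * (t * ⟪a - z, y - a⟫) + t ^ 2 * ‖y - a‖ ^ 2 := by
      have : a + t • (y - a) - z = (a - z) + t • (y - a) := by abel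
      rw [this, norm_add_sq_real, real_inner_smul_right, norm_smul, Real.norm_eq_abs,
        abs_of_pos ht0, mul_pow]
    have h2η : (0:ℝ) < 2 * η := by linarith
    have hstep : 0 ≤ (2 * (t * ⟪a - z, y - a⟫) + t ^ 2 * ‖y - a‖ ^ 2) / (2 * η)
        + t * (h y - h a) := by
      rw [hnorm] at hmem
      have expand : (‖a - z‖ ^ 2 + 2 * (t * ⟪a - z, y - a⟫) + t ^ 2 * ‖y - a‖ ^ 2) / (2 * η)
          = ‖a - z‖ ^ 2 / (2 * η)
            + (2 * (t * ⟪a - z, y - a⟫) + t ^ 2 * ‖y - a‖ ^ 2) / (2 * η) := by ring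
      rw [expand] at hmem
      linarith
    have hfac : 0 ≤ t * ((⟪a - z, y - a⟫ / η + (h y - h a)) + t * (‖y - a‖ ^ 2 / (2 * η))) := by
      have expand2 : t * ((⟪a - z, y - a⟫ / η + (h y - h a)) + t * (‖y - a‖ ^ 2 / (2 * η)))
          = (2 * (t * ⟪a - z, y - a⟫) + t ^ 2 * ‖y - a‖ ^ 2) / (2 * η) + t * (h y - h a) := by
        field_simp; ring
      rw [expand2]; exact hstep
    nlinarith
  have hc0 : 0 ≤ ⟪a - z, y - a⟫ / η + (h y - h a) :=
    osc_small_t_limit _ _ (by positivity) key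
  have hswap : ⟪a - z, y - a⟫ = ⟪z - a, a - y⟫ := by
    rw [← neg_sub z a, ← neg_sub a y, inner_neg_neg]
  have h3 : η * (h a - h y) ≤ ⟪a - z, y - a⟫ / η * η := by
    rw [mul_comm _ η]
    apply mul_le_mul_of_nonneg_left _ hη.le
    linarith
  rw [div_mul_cancel₀ _ (ne_of_gt hη), hswap] at h3
  exact h3

theorem osc_prox_contract (h : E → ℝ) (hh : ConvexOn ℝ Set.univ h) (η : ℝ) (hη : 0 < η)
    (z₁ z₂ a₁ a₂ : E)
    (hm₁ : IsMinOn (fun y => ‖y - z₁‖ ^ 2 / (2 * η) + h y) Set.univ a₁)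
    (hm₂ : IsMinOn (fun y => ‖y - z₂‖ ^ 2 / (2 * η) + h y) Set.univ a₂) :
    ‖a₁ - a₂‖ ≤ ‖z₁ - z₂‖ := by
  have h1 := osc_prox_subgrad h hh η hη z₁ a₁ hm₁ a₂
  have h2 := osc_prox_subgrad h hh η hη z₂ a₂ hm₂ a₁
  have hsum : 0 ≤ ⟪z₁ - a₁, a₁ - a₂⟫ + ⟪z₂ - a₂, a₂ - a₁⟫ := by linarith
  have hid : ⟪z₁ - a₁, a₁ - a₂⟫ + ⟪z₂ - a₂, a₂ - a₁⟫
      = ⟪z₁ - z₂, a₁ - a₂⟫ - ‖a₁ - a₂‖ ^ 2 := by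
    rw [← real_inner_self_eq_norm_sq]
    have e1 : ⟪z₂ - a₂, a₂ - a₁⟫ = ⟪a₂ - z₂, a₁ - a₂⟫ := by
      rw [← neg_sub a₂ z₂, ← neg_sub a₁ a₂, inner_neg_neg]
    rw [e1, ← inner_add_left, ← inner_sub_left]
    congr 1
    abel
  rw [hid] at hsum
  have hcs : ⟪z₁ - z₂, a₁ - a₂⟫ ≤ ‖z₁ - z₂‖ * ‖a₁ - a₂‖ := real_inner_le_norm _ _
  have hsq : ‖a₁ - a₂‖ ^ 2 ≤ ‖z₁ - z₂‖ * ‖a₁ - a₂‖ := by linarith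
  rcases eq_or_lt_of_le (norm_nonneg (a₁ - a₂)) with hz | hpos
  · rw [← hz]; exact norm_nonneg _
  · exact le_of_mul_le_mul_right
      (by nlinarith : ‖a₁ - a₂‖ * ‖a₁ - a₂‖ ≤ ‖z₁ - z₂‖ * ‖a₁ - a₂‖) hpos

theorem osc_symmetrization {Ω : Type*} [MeasurableSpace Ω] (P : Measure Ω)
    [IsProbabilityMeasure P] [Nonempty Ω]
    (e ξ : Ω → E) (he_int : Integrable e P)
    (he2 : Integrable (fun ω => ‖e ω‖ ^ 2) P)
    (hemean : ∫ ω, e ω ∂P = 0)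
    (hξm : AEStronglyMeasurable ξ P) (η : ℝ) (hη : 0 ≤ η)
    (hlip : ∀ ω ω', ‖ξ ω - ξ ω'‖ ≤ η * ‖e ω - e ω'‖) :
    ∫ ω, ⟪e ω, ξ ω⟫ ∂P ≤ η * ∫ ω, ‖e ω‖ ^ 2 ∂P := by
  obtain ⟨ω₀⟩ := (inferInstance : Nonempty Ω)
  set K : ℝ := ‖ξ ω₀‖ + η * ‖e ω₀‖ with hK
  have hK0 : 0 ≤ K := by positivity
  have hξbd : ∀ ω, ‖ξ ω‖ ≤ K + η * ‖e ω‖ := by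
    intro ω
    have h1 : ‖ξ ω‖ ≤ ‖ξ ω₀‖ + ‖ξ ω - ξ ω₀‖ := by
      linarith [abs_le.1 (abs_norm_sub_norm_le (ξ ω) (ξ ω₀))]
    have h2 : ‖ξ ω - ξ ω₀‖ ≤ η * (‖e ω‖ + ‖e ω₀‖) := by
      calc ‖ξ ω - ξ ω₀‖ ≤ η * ‖e ω - e ω₀‖ := hlip ω ω₀
        _ ≤ η * (‖e ω‖ + ‖e ω₀‖) := by
            apply mul_le_mul_of_nonneg_left (norm_sub_le _ _) hη
    rw [hK]; nlinarith
  have hξ_int : Integrable ξ P := by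
    apply Integrable.mono' ((integrable_const K).add (he_int.norm.const_mul η)) hξm
    filter_upwards with ω using hξbd ω
  have hip_int : Integrable (fun ω => ⟪e ω, ξ ω⟫) P := by
    apply Integrable.mono' ((he_int.norm.const_mul K).add (he2.const_mul η))
      (he_int.aestronglyMeasurable.inner hξm)
    filter_upwards with ω
    calc ‖⟪e ω, ξ ω⟫‖ ≤ ‖e ω‖ * ‖ξ ω‖ := norm_inner_le_norm _ _
      _ ≤ ‖e ω‖ * (K + η * ‖e ω‖) := by
          apply mul_le_mul_of_nonneg_left (hξbd ω) (norm_nonneg _)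
      _ = K * ‖e ω‖ + η * ‖e ω‖ ^ 2 := by ring
  set J : ℝ := ∫ ω, ⟪e ω, ξ ω⟫ ∂P with hJ
  set S : ℝ := ∫ ω, ‖e ω‖ ^ 2 ∂P with hS
  set m : E := ∫ ω, ξ ω ∂P with hm
  have inner_e_zero : ∀ c : E, ∫ ω, ⟪e ω, c⟫ ∂P = 0 := by
    intro c
    have hcomm : ∀ ω, ⟪e ω, c⟫ = ⟪c, e ω⟫ := fun ω => real_inner_comm _ _
    simp_rw [hcomm]
    rw [integral_inner he_int, hemean, inner_zero_right]
  have step1 : ∀ ω' : Ω, J - ⟪e ω', m⟫ + ⟪e ω', ξ ω'⟫ ≤ η * S + η * ‖e ω'‖ ^ 2 := by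
    intro ω'
    have i1 : Integrable (fun ω => ⟪e ω, ξ ω⟫ - ⟪e ω, ξ ω'⟫) P :=
      hip_int.sub (he_int.inner_const (ξ ω'))
    have i2 : Integrable (fun ω => ⟪e ω, ξ ω⟫ - ⟪e ω, ξ ω'⟫ - ⟪e ω', ξ ω⟫) P :=
      i1.sub (hξ_int.const_inner (e ω'))
    have i3 : Integrable (fun ω => ⟪e ω, ξ ω⟫ - ⟪e ω, ξ ω'⟫ - ⟪e ω', ξ ω⟫ + ⟪e ω', ξ ω'⟫) P :=
      i2.add (integrable_const _)
    have i4 : Integrable (fun ω => 2 * ⟪e ω, e ω'⟫) P :=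
      (he_int.inner_const (e ω')).const_mul 2
    have i5 : Integrable (fun ω => ‖e ω‖ ^ 2 - 2 * ⟪e ω, e ω'⟫) P := he2.sub i4
    have i6 : Integrable (fun ω => ‖e ω‖ ^ 2 - 2 * ⟪e ω, e ω'⟫ + ‖e ω'‖ ^ 2) P :=
      i5.add (integrable_const _)
    have i7 : Integrable (fun ω => η * (‖e ω‖ ^ 2 - 2 * ⟪e ω, e ω'⟫ + ‖e ω'‖ ^ 2)) P :=
      i6.const_mul η
    have hpt : ∀ ω, ⟪e ω, ξ ω⟫ - ⟪e ω, ξ ω'⟫ - ⟪e ω', ξ ω⟫ + ⟪e ω', ξ ω'⟫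
        ≤ η * (‖e ω‖ ^ 2 - 2 * ⟪e ω, e ω'⟫ + ‖e ω'‖ ^ 2) := by
      intro ω
      have h1 : ⟪e ω - e ω', ξ ω - ξ ω'⟫
          = ⟪e ω, ξ ω⟫ - ⟪e ω, ξ ω'⟫ - ⟪e ω', ξ ω⟫ + ⟪e ω', ξ ω'⟫ := by
        rw [inner_sub_left, inner_sub_right, inner_sub_right]; ring
      have h2 : ‖e ω - e ω'‖ ^ 2 = ‖e ω‖ ^ 2 - 2 * ⟪e ω, e ω'⟫ + ‖e ω'‖ ^ 2 :=
        norm_sub_sq_real _ _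
      have h3 : ⟪e ω - e ω', ξ ω - ξ ω'⟫ ≤ ‖e ω - e ω'‖ * ‖ξ ω - ξ ω'‖ :=
        real_inner_le_norm _ _
      have h4 : ‖e ω - e ω'‖ * ‖ξ ω - ξ ω'‖ ≤ ‖e ω - e ω'‖ * (η * ‖e ω - e ω'‖) :=
        mul_le_mul_of_nonneg_left (hlip ω ω') (norm_nonneg _)
      nlinarith [h3, h4]
    have hmono := integral_mono i3 i7 hpt
    have lhs_eq : ∫ ω, (⟪e ω, ξ ω⟫ - ⟪e ω, ξ ω'⟫ - ⟪e ω', ξ ω⟫ + ⟪e ω', ξ ω'⟫) ∂P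
        = J - ⟪e ω', m⟫ + ⟪e ω', ξ ω'⟫ := by
      rw [integral_add i2 (integrable_const _), integral_sub i1 (hξ_int.const_inner (e ω')),
        integral_sub hip_int (he_int.inner_const (ξ ω')), integral_const,
        inner_e_zero (ξ ω'), integral_inner hξ_int, ← hm, ← hJ]
      simp
    have rhs_eq : ∫ ω, (η * (‖e ω‖ ^ 2 - 2 * ⟪e ω, e ω'⟫ + ‖e ω'‖ ^ 2)) ∂P
        = η * (S + ‖e ω'‖ ^ 2) := by
      rw [integral_const_mul, integral_add i5 (integrable_const _), integral_sub he2 i4,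
        integral_const_mul, inner_e_zero (e ω'), integral_const, ← hS]
      simp
    rw [lhs_eq, rhs_eq] at hmono
    linarith [hmono]
  have j1 : Integrable (fun ω' => J - ⟪e ω', m⟫) P :=
    (integrable_const J).sub (he_int.inner_const m)
  have int_l2 : Integrable (fun ω' => J - ⟪e ω', m⟫ + ⟪e ω', ξ ω'⟫) P := j1.add hip_int
  have int_r2 : Integrable (fun ω' => η * S + η * ‖e ω'‖ ^ 2) P :=
    (integrable_const _).add (he2.const_mul η)
  have hmono2 := integral_mono int_l2 int_r2 step1
  have lhs2 : ∫ ω', (J - ⟪e ω', m⟫ + ⟪e ω', ξ ω'⟫) ∂P = 2 * J := by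
    rw [integral_add j1 hip_int, integral_sub (integrable_const J) (he_int.inner_const m),
      integral_const, inner_e_zero m, ← hJ]
    simp
    ring
  have rhs2 : ∫ ω', (η * S + η * ‖e ω'‖ ^ 2) ∂P = 2 * (η * S) := by
    rw [integral_add (integrable_const _) (he2.const_mul η), integral_const,
      integral_const_mul, ← hS]
    simp
    ring
  rw [lhs2, rhs2] at hmono2
  linarith

end Aux

theorem osc_coord_le_norm {n : ℕ} (v : EuclideanSpace ℝ (Fin n)) (i : Fin n) : |v i| ≤ ‖v‖ := by
  rw [EuclideanSpace.norm_eq]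
  have h1 : |v i| = Real.sqrt (‖v i‖ ^ 2) := by
    rw [Real.sqrt_sq_eq_abs]; simp
  rw [h1]
  apply Real.sqrt_le_sqrt
  exact Finset.single_le_sum (fun j _ => sq_nonneg ‖v j‖) (Finset.mem_univ i)

theorem osc_aesm_of_lipschitz_comp {n : ℕ} {Ω : Type*} [MeasurableSpace Ω] (P : Measure Ω)
    [Nonempty Ω] (g u : Ω → EuclideanSpace ℝ (Fin n)) (hg : AEStronglyMeasurable g P)
    (K : ℝ) (hK : 0 ≤ K)
    (hlip : ∀ ω ω', ‖u ω - u ω'‖ ≤ K * ‖g ω - g ω'‖) :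
    AEStronglyMeasurable u P := by
  classical
  set s : Set (EuclideanSpace ℝ (Fin n)) := Set.range g with hs
  set F : EuclideanSpace ℝ (Fin n) → (Fin n → ℝ) :=
    fun z => if hz : z ∈ s then (fun i => u hz.choose i) else 0 with hF
  have hwd : ∀ ω : Ω, F (g ω) = fun i => u ω i := by
    intro ω
    have hz : g ω ∈ s := Set.mem_range_self ω
    have hch : g hz.choose = g ω := hz.choose_spec
    have : u hz.choose = u ω := by
      have := hlip hz.choose ω
      rw [hch] at this
      simp only [sub_self, norm_zero, mul_zero] at this
      have h0 : ‖u hz.choose - u ω‖ = 0 := le_antisymm this (norm_nonneg _)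
      rwa [norm_sub_eq_zero_iff] at h0
    simp only [hF, dif_pos hz, this]
  have hlipF : LipschitzOnWith (Real.toNNReal K) F s := by
    apply LipschitzOnWith.of_dist_le_mul
    rintro z ⟨ω, rfl⟩ w ⟨ω', rfl⟩
    rw [hwd ω, hwd ω']
    rw [dist_pi_le_iff (by positivity)]
    intro i
    rw [Real.dist_eq]
    calc |u ω i - u ω' i| = |(u ω - u ω') i| := by simp [PiLp.sub_apply]
      _ ≤ ‖u ω - u ω'‖ := osc_coord_le_norm _ _
      _ ≤ K * ‖g ω - g ω'‖ := hlip ω ω'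
      _ = ↑(Real.toNNReal K) * dist (g ω) (g ω') := by
          rw [Real.coe_toNNReal K hK, dist_eq_norm]
  obtain ⟨G, hGlip, hGeq⟩ := hlipF.extend_pi
  have hueq : u = fun ω => (EuclideanSpace.equiv (Fin n) ℝ).symm (G (g ω)) := by
    funext ω
    have h1 : G (g ω) = F (g ω) := (hGeq (Set.mem_range_self ω)).symm
    rw [h1, hwd ω]
    rfl
  rw [hueq]
  exact (((EuclideanSpace.equiv (Fin n) ℝ).symm.continuous.comp
    hGlip.continuous)).comp_aestronglyMeasurable hg

theorem osc_arith (eta L μ N M A G F1 F2 Ee ha hxs hx fa fxs fx : ℝ)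
    (hA : eta * (ha - hxs) ≤ -A - eta * G)
    (hsplit : G = F1 + F2 + -Ee)
    (h4' : eta * (fa - fx - L / 2 * N) ≤ eta * F1)
    (h5' : eta * (fx - fxs + μ / 2 * M) ≤ eta * F2)
    (h6' : eta * (fxs + hxs) ≤ eta * (fx + hx))
    (h8' : eta * (L / 2 * N) ≤ 1 / 2 * N) :
    N + 2 * (A - N) ≤ -(μ * eta * M) - 2 * eta * ((fa + ha) - (fx + hx)) + 2 * eta * Ee := by
  have hs2 : eta * G = eta * F1 + eta * F2 - eta * Ee := by rw [hsplit]; ring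
  linarith [hA, hs2, h4', h5', h6', h8']

set_option maxHeartbeats 1000000 in
/-- Core one-step contraction estimate (bound on Q₁, combining (eqn:svrg-0) and
(eqn:svrg)) for the decoupled asynchronous proximal SGD update. -/
theorem one_step_contraction (n : ℕ) {Ω : Type*} [MeasurableSpace Ω]
    (P : Measure Ω) [IsProbabilityMeasure P]
    (f h : EuclideanSpace ℝ (Fin n) → ℝ)
    (f' : EuclideanSpace ℝ (Fin n) → EuclideanSpace ℝ (Fin n))
    (μ L : ℝ) (hμ : 0 < μ) (hL : 0 < L)
    (hgrad : ∀ z, HasGradientAt f (f' z) z)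
    (hlip : ∀ z w, ‖f' z - f' w‖ ≤ L * ‖z - w‖)
    (hsc : ∀ z w : EuclideanSpace ℝ (Fin n),
      f w + ⟪f' w, z - w⟫ + μ / 2 * ‖z - w‖ ^ 2 ≤ f z)
    (hhconv : ConvexOn ℝ Set.univ h)
    (xs : EuclideanSpace ℝ (Fin n))
    (hmin : IsMinOn (fun z => f z + h z) Set.univ xs)
    (eta : ℝ) (heta : 0 < eta) (hetaL : eta ≤ 1 / L)
    (Cf : ℝ)
    (x : EuclideanSpace ℝ (Fin n))
    (g : Ω → EuclideanSpace ℝ (Fin n))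
    (hgint : Integrable g P)
    (hunbiased : ∫ ω, g ω ∂P = f' x)
    (hvar2int : Integrable (fun ω => ‖g ω - f' x‖ ^ 2) P)
    (hvar : ∫ ω, ‖g ω - f' x‖ ^ 2 ∂P ≤ Cf)
    (x' : Ω → EuclideanSpace ℝ (Fin n))
    (hprox : ∀ ω, IsMinOn
      (fun y => ‖y - (x - eta • g ω)‖ ^ 2 / (2 * eta) + h y) Set.univ (x' ω))
    (hint1 : Integrable (fun ω => ‖x' ω - x‖ ^ 2 + 2 * ⟪x' ω - x, x - xs⟫) P)
    (hint2 : Integrable (fun ω => f (x' ω) + h (x' ω)) P) :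
    ∫ ω, (‖x' ω - x‖ ^ 2 + 2 * ⟪x' ω - x, x - xs⟫) ∂P
      ≤ -(μ * eta * ‖x - xs‖ ^ 2)
        - 2 * eta * ((∫ ω, (f (x' ω) + h (x' ω)) ∂P) - (f x + h x))
        + 2 * eta ^ 2 * Cf := by
  -- Ω is nonempty
  have hne : Nonempty Ω := by
    rcases isEmpty_or_nonempty Ω with hE | hn
    · exfalso
      have h1 : P Set.univ = 1 := measure_univ
      rw [show (Set.univ : Set Ω) = ∅ from Set.univ_eq_empty_iff.2 hE, measure_empty] at h1
      exact zero_ne_one h1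
    · exact hn
  have hetaL' : eta * L ≤ 1 := by
    rw [le_div_iff₀ hL] at hetaL
    linarith
  -- noise
  have he_int : Integrable (fun ω => g ω - f' x) P := hgint.sub (integrable_const _)
  have hemean : ∫ ω, (g ω - f' x) ∂P = 0 := by
    rw [integral_sub hgint (integrable_const _), hunbiased, integral_const]
    simp
  -- Lipschitz property of x' in terms of g
  have hx'lip : ∀ ω ω', ‖x' ω - x' ω'‖ ≤ eta * ‖g ω - g ω'‖ := by
    intro ω ω'
    have := osc_prox_contract h hhconv eta heta (x - eta • g ω) (x - eta • g ω')
      (x' ω) (x' ω') (hprox ω) (hprox ω')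
    calc ‖x' ω - x' ω'‖ ≤ ‖(x - eta • g ω) - (x - eta • g ω')‖ := this
      _ = eta * ‖g ω - g ω'‖ := by
          have h1 : (x - eta • g ω) - (x - eta • g ω') = -(eta • (g ω - g ω')) := by
            rw [smul_sub]; abel
          rw [h1, norm_neg, norm_smul, Real.norm_eq_abs, abs_of_pos heta]
  -- measurability of x'
  have hx'm : AEStronglyMeasurable x' P :=
    osc_aesm_of_lipschitz_comp P g x' hgint.aestronglyMeasurable eta heta.le hx'lip
  -- the Lipschitz bound for ξ = xs - x'
  have hξlip : ∀ ω ω', ‖(xs - x' ω) - (xs - x' ω')‖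
      ≤ eta * ‖(g ω - f' x) - (g ω' - f' x)‖ := by
    intro ω ω'
    have h1 : (xs - x' ω) - (xs - x' ω') = -(x' ω - x' ω') := by abel
    have h2 : (g ω - f' x) - (g ω' - f' x) = g ω - g ω' := by abel
    rw [h1, h2, norm_neg]
    exact hx'lip ω ω'
  -- the symmetrization bound
  have hJle : ∫ ω, ⟪g ω - f' x, xs - x' ω⟫ ∂P ≤ eta * Cf := by
    have hsym := osc_symmetrization P (fun ω => g ω - f' x) (fun ω => xs - x' ω)
      he_int hvar2int hemean (aestronglyMeasurable_const.sub hx'm) eta heta.le hξlip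
    calc ∫ ω, ⟪g ω - f' x, xs - x' ω⟫ ∂P ≤ eta * ∫ ω, ‖g ω - f' x‖ ^ 2 ∂P := hsym
      _ ≤ eta * Cf := mul_le_mul_of_nonneg_left hvar heta.le
  -- integrability of the inner product term
  obtain ⟨ω₀⟩ := hne
  have hK0 : (0:ℝ) ≤ ‖xs - x' ω₀‖ + eta * ‖g ω₀ - f' x‖ := by positivity
  have hξbd : ∀ ω, ‖xs - x' ω‖
      ≤ (‖xs - x' ω₀‖ + eta * ‖g ω₀ - f' x‖) + eta * ‖g ω - f' x‖ := by
    intro ω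
    have h1 : ‖xs - x' ω‖ ≤ ‖xs - x' ω₀‖ + ‖(xs - x' ω) - (xs - x' ω₀)‖ := by
      linarith [abs_le.1 (abs_norm_sub_norm_le (xs - x' ω) (xs - x' ω₀))]
    have h2 : ‖(xs - x' ω) - (xs - x' ω₀)‖
        ≤ eta * (‖g ω - f' x‖ + ‖g ω₀ - f' x‖) := by
      calc ‖(xs - x' ω) - (xs - x' ω₀)‖ ≤ eta * ‖(g ω - f' x) - (g ω₀ - f' x)‖ := hξlip ω ω₀
        _ ≤ eta * (‖g ω - f' x‖ + ‖g ω₀ - f' x‖) :=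
            mul_le_mul_of_nonneg_left (norm_sub_le _ _) heta.le
    nlinarith
  have hip_int : Integrable (fun ω => ⟪g ω - f' x, xs - x' ω⟫) P := by
    apply Integrable.mono'
      ((he_int.norm.const_mul (‖xs - x' ω₀‖ + eta * ‖g ω₀ - f' x‖)).add (hvar2int.const_mul eta))
      (he_int.aestronglyMeasurable.inner (aestronglyMeasurable_const.sub hx'm))
    filter_upwards with ω
    calc ‖⟪g ω - f' x, xs - x' ω⟫‖ ≤ ‖g ω - f' x‖ * ‖xs - x' ω‖ := norm_inner_le_norm _ _
      _ ≤ ‖g ω - f' x‖ * ((‖xs - x' ω₀‖ + eta * ‖g ω₀ - f' x‖) + eta * ‖g ω - f' x‖) :=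
          mul_le_mul_of_nonneg_left (hξbd ω) (norm_nonneg _)
      _ = (‖xs - x' ω₀‖ + eta * ‖g ω₀ - f' x‖) * ‖g ω - f' x‖ + eta * ‖g ω - f' x‖ ^ 2 := by
          ring
  -- pointwise deterministic inequality
  have hpoint : ∀ ω, ‖x' ω - x‖ ^ 2 + 2 * ⟪x' ω - x, x - xs⟫
      ≤ -(μ * eta * ‖x - xs‖ ^ 2) - 2 * eta * ((f (x' ω) + h (x' ω)) - (f x + h x))
        + 2 * eta * ⟪g ω - f' x, xs - x' ω⟫ := by
    intro ω
    set a := x' ω with ha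
    have hA := osc_prox_subgrad h hhconv eta heta (x - eta • g ω) a (hprox ω) xs
    have hAz : ⟪(x - eta • g ω) - a, a - xs⟫
        = -⟪a - x, a - xs⟫ - eta * ⟪g ω, a - xs⟫ := by
      have h1 : (x - eta • g ω) - a = -(a - x) - eta • g ω := by abel
      rw [h1, inner_sub_left, inner_neg_left, real_inner_smul_left]
    rw [hAz] at hA
    have hsplit : ⟪g ω, a - xs⟫
        = ⟪f' x, a - x⟫ + ⟪f' x, x - xs⟫ + ⟪g ω - f' x, a - xs⟫ := by
      have e1 : ⟪f' x, a - x⟫ + ⟪f' x, x - xs⟫ = ⟪f' x, a - xs⟫ := by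
        rw [← inner_add_right]
        congr 1
        abel
      have e2 : ⟪g ω - f' x, a - xs⟫ = ⟪g ω, a - xs⟫ - ⟪f' x, a - xs⟫ :=
        inner_sub_left _ _ _
      linarith
    have h9 : ⟪g ω - f' x, a - xs⟫ = -⟪g ω - f' x, xs - a⟫ := by
      rw [← inner_neg_right]
      congr 1
      abel
    have h4 := osc_descent_lemma f f' L hgrad hlip x a
    have h4' : eta * (f a - f x - L / 2 * ‖a - x‖ ^ 2) ≤ eta * ⟪f' x, a - x⟫ :=
      mul_le_mul_of_nonneg_left (by linarith [h4]) heta.le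
    have h5 := hsc xs x
    have h5a : ⟪f' x, x - xs⟫ = -⟪f' x, xs - x⟫ := by
      rw [← inner_neg_right]
      congr 1
      abel
    have h5b : ‖xs - x‖ = ‖x - xs‖ := norm_sub_rev _ _
    have h5' : eta * (f x - f xs + μ / 2 * ‖x - xs‖ ^ 2) ≤ eta * ⟪f' x, x - xs⟫ := by
      apply mul_le_mul_of_nonneg_left _ heta.le
      rw [h5a]
      rw [h5b] at h5
      linarith
    have h6 : f xs + h xs ≤ f x + h x := hmin (Set.mem_univ x)
    have h6' : eta * (f xs + h xs) ≤ eta * (f x + h x) :=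
      mul_le_mul_of_nonneg_left h6 heta.le
    have h7 : ⟪a - x, x - xs⟫ = ⟪a - x, a - xs⟫ - ‖a - x‖ ^ 2 := by
      have h7a : x - xs = (a - xs) - (a - x) := by abel
      rw [h7a, inner_sub_right, real_inner_self_eq_norm_sq]
    have h8' : eta * (L / 2 * ‖a - x‖ ^ 2) ≤ 1 / 2 * ‖a - x‖ ^ 2 := by
      nlinarith [sq_nonneg ‖a - x‖]
    rw [h9] at hsplit
    have := osc_arith eta L μ (‖a - x‖ ^ 2) (‖x - xs‖ ^ 2) ⟪a - x, a - xs⟫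
      ⟪g ω, a - xs⟫ ⟪f' x, a - x⟫ ⟪f' x, x - xs⟫ ⟪g ω - f' x, xs - a⟫
      (h a) (h xs) (h x) (f a) (f xs) (f x) hA hsplit h4' h5' h6' h8'
    rw [h7]
    exact this
  -- integrate
  have i_c : Integrable (fun ω => 2 * eta * ((f (x' ω) + h (x' ω)) - (f x + h x))) P :=
    (hint2.sub (integrable_const _)).const_mul (2 * eta)
  have i_a : Integrable (fun ω => -(μ * eta * ‖x - xs‖ ^ 2)
      - 2 * eta * ((f (x' ω) + h (x' ω)) - (f x + h x))) P :=
    (integrable_const _).sub i_c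
  have i_b : Integrable (fun ω => 2 * eta * ⟪g ω - f' x, xs - x' ω⟫) P :=
    hip_int.const_mul (2 * eta)
  have i_rhs : Integrable (fun ω => -(μ * eta * ‖x - xs‖ ^ 2)
      - 2 * eta * ((f (x' ω) + h (x' ω)) - (f x + h x))
      + 2 * eta * ⟪g ω - f' x, xs - x' ω⟫) P := i_a.add i_b
  have hmono := integral_mono hint1 i_rhs hpoint
  have hrhs_eq : ∫ ω, (-(μ * eta * ‖x - xs‖ ^ 2)
      - 2 * eta * ((f (x' ω) + h (x' ω)) - (f x + h x))
      + 2 * eta * ⟪g ω - f' x, xs - x' ω⟫) ∂P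
      = -(μ * eta * ‖x - xs‖ ^ 2)
        - 2 * eta * ((∫ ω, (f (x' ω) + h (x' ω)) ∂P) - (f x + h x))
        + 2 * eta * ∫ ω, ⟪g ω - f' x, xs - x' ω⟫ ∂P := by
    rw [integral_add i_a i_b, integral_sub (integrable_const _) i_c, integral_const,
      integral_const_mul, integral_const_mul,
      integral_sub hint2 (integrable_const _), integral_const]
    simp
  rw [hrhs_eq] at hmono
  have h2 : 2 * eta * ∫ ω, ⟪g ω - f' x, xs - x' ω⟫ ∂P ≤ 2 * eta ^ 2 * Cf := by
    calc 2 * eta * ∫ ω, ⟪g ω - f' x, xs - x' ω⟫ ∂P ≤ 2 * eta * (eta * Cf) :=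
          mul_le_mul_of_nonneg_left hJle (by positivity)
      _ = 2 * eta ^ 2 * Cf := by ring
  exact hmono.trans (add_le_add_right h2 _)
end

section
/- Let η > 0, let h be convex with all subgradients bounded by ‖∂h‖² ≤ C_h, let f be convex differentiable with L-Lipschitz gradient and ‖∇f(x*)‖² ≤ C_h, let g be a random vector with E[g|x] = ∇f(x) and E[‖g - ∇f(x)‖²|x] ≤ C_f, and let x' = Prox_{η,h}(x - ηg). Then E[P(x) - P(x')] ≤ 9ηL² E‖x - x*‖₂² + 4ηC_f + (23/2)ηC_h, where P = f + h. -/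
open scoped RealInnerProductSpace
open MeasureTheory

/-- `g₀` is a subgradient of the convex function `h` at `x`. -/
def SubgradAt {m : ℕ} (h : EuclideanSpace ℝ (Fin m) → ℝ)
    (g₀ x : EuclideanSpace ℝ (Fin m)) : Prop :=
  ∀ y, h x + ⟪g₀, y - x⟫ ≤ h y

section Aux
variable {m : ℕ}
local notation "E" => EuclideanSpace ℝ (Fin m)

/-- Gradient inequality for convex differentiable functions. -/
lemma grad_convex_le {f : E → ℝ} {f' : E → E} (hconv : ConvexOn ℝ Set.univ f)
    (hgrad : ∀ z, HasGradientAt f (f' z) z) (a b : E) :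
    f a + ⟪f' a, b - a⟫ ≤ f b := by
  set F : ℝ → ℝ := f ∘ (AffineMap.lineMap a b) with hFdef
  have hline : ∀ τ : ℝ, AffineMap.lineMap a b τ = a + τ • (b - a) := by
    intro τ
    simp [AffineMap.lineMap_apply]
    module
  have hF : HasDerivAt F ⟪f' a, b - a⟫ 0 := by
    have h1 : HasDerivAt (fun τ : ℝ => a + τ • (b - a)) (b - a) 0 := by
      simpa using ((hasDerivAt_id (0:ℝ)).smul_const (b - a)).const_add a
    have h2 := (hgrad a).hasFDerivAt
    have h2' : HasFDerivAt f ((InnerProductSpace.toDual ℝ _) (f' a))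
        (a + (0:ℝ) • (b - a)) := by simpa using h2
    have h3 := h2'.comp_hasDerivAt 0 h1
    have : F = fun τ : ℝ => f (a + τ • (b - a)) := by
      funext τ; simp [hFdef, hline]
    rw [this]
    simpa [Function.comp_def] using h3
  have hFconv : ConvexOn ℝ Set.univ F := by
    have := hconv.comp_affineMap (AffineMap.lineMap a b)
    simpa using this
  have := hFconv.le_slope_of_hasDerivAt (Set.mem_univ (0:ℝ)) (Set.mem_univ (1:ℝ))
    one_pos hF
  have hs : slope F 0 1 = f b - f a := by
    simp [slope_def_field, hFdef]
  rw [hs] at this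
  linarith

/-- The proximal point furnishes a subgradient of `h` at itself. -/
lemma subgradAt_of_prox {h : E → ℝ} (hh : ConvexOn ℝ Set.univ h) {t : ℝ} (ht : 0 < t)
    {z p : E} (hp : IsMinOn (fun y => ‖y - z‖ ^ 2 / (2 * t) + h y) Set.univ p) :
    SubgradAt h (t⁻¹ • (z - p)) p := by
  intro y
  set d : E := y - p with hd
  set I : ℝ := ⟪p - z, d⟫ with hI
  set N : ℝ := ‖d‖ ^ 2 with hN
  have hN0 : 0 ≤ N := by positivity
  have h2t : (0:ℝ) < 2 * t := by linarith
  have hinner : ⟪t⁻¹ • (z - p), y - p⟫ = t⁻¹ * (-I) := by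
    rw [real_inner_smul_left]
    congr 1
    rw [hI, ← inner_neg_left]
    congr 1
    abel
  have key : ∀ τ : ℝ, 0 < τ → τ ≤ 1 → 2 * t * (h p) - 2 * I ≤ 2 * t * (h y) + τ * N := by
    intro τ hτ hτ1
    set w : E := p + τ • d with hw
    have hmin := isMinOn_iff.mp hp w (Set.mem_univ w)
    have hwz : ‖w - z‖ ^ 2 = ‖p - z‖ ^ 2 + 2 * τ * I + τ ^ 2 * N := by
      have : w - z = (p - z) + τ • d := by rw [hw]; abel
      rw [this, @norm_add_sq_real, real_inner_smul_right, norm_smul, Real.norm_eq_abs,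
        abs_of_pos hτ, ← hI]
      rw [mul_pow, ← hN]
      ring
    have hconvw : h w ≤ (1 - τ) * h p + τ * h y := by
      have hcomb : w = (1 - τ) • p + τ • y := by
        rw [hw, hd]; module
      have := hh.2 (Set.mem_univ p) (Set.mem_univ y) (by linarith : (0:ℝ) ≤ 1 - τ)
        (le_of_lt hτ) (by ring)
      rw [hcomb]
      simpa [smul_eq_mul] using this
    have hmin' : ‖p - z‖ ^ 2 + 2 * t * h p ≤ ‖w - z‖ ^ 2 + 2 * t * h w := by
      have := mul_le_mul_of_nonneg_left hmin (le_of_lt h2t)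
      have ht' : t ≠ 0 := ne_of_gt ht
      field_simp at this
      linarith
    rw [hwz] at hmin'
    have step : 2 * t * τ * (h p - h y) ≤ 2 * τ * I + τ ^ 2 * N := by nlinarith
    nlinarith [mul_le_mul_of_nonneg_left step (le_of_lt (inv_pos.mpr hτ)),
      mul_pos h2t hτ, sq_nonneg τ]
  have main : h p + t⁻¹ * (-I) ≤ h y := by
    apply le_of_forall_pos_le_add
    intro ε hε
    set τ : ℝ := min 1 (2 * t * ε / (N + 1)) with hτdef
    have hτpos : 0 < τ := lt_min one_pos (by positivity)
    have hτ1 : τ ≤ 1 := min_le_left _ _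
    have hk := key τ hτpos hτ1
    have hτN : τ * N ≤ 2 * t * ε := by
      calc τ * N ≤ (2 * t * ε / (N + 1)) * N :=
            mul_le_mul_of_nonneg_right (min_le_right _ _) hN0
        _ ≤ 2 * t * ε := by
            rw [div_mul_eq_mul_div, div_le_iff₀ (by positivity : (0:ℝ) < N + 1)]
            nlinarith [mul_pos (mul_pos two_pos ht) hε]
    have : 2 * t * (h p + t⁻¹ * (-I)) ≤ 2 * t * (h y + ε) := by
      have hexp : 2 * t * (h p + t⁻¹ * (-I)) = 2 * t * h p - 2 * I := by
        field_simp
        ring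
      rw [hexp]
      nlinarith [hk, hτN]
    exact le_of_mul_le_mul_left (by linarith) h2t
  rw [hinner]
  exact main

/-- Existence of proximal points (the objective is coercive and continuous). -/
lemma prox_exists {h : E → ℝ} (hh : ConvexOn ℝ Set.univ h) {s₀ p₀ : E}
    (hs₀ : SubgradAt h s₀ p₀) {t : ℝ} (ht : 0 < t) (a : E) :
    ∃ p, IsMinOn (fun y => ‖y - a‖ ^ 2 / (2 * t) + h y) Set.univ p := by
  have hcont : Continuous h := hh.locallyLipschitz.continuous
  set φ : E → ℝ := fun y => ‖y - a‖ ^ 2 / (2 * t) + h y with hφ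
  have hφcont : Continuous φ := by
    apply Continuous.add
    · exact ((continuous_id.sub continuous_const).norm.pow 2).div_const _
    · exact hcont
  have h2t : (0:ℝ) < 2 * t := by linarith
  set K : ℝ := ‖s₀‖ with hK
  set c : ℝ := h p₀ - K * ‖a - p₀‖ with hc
  set q : ℝ → ℝ := fun r => r ^ 2 / (2 * t) - K * r + c with hq
  have hlb : ∀ y, q ‖y - a‖ ≤ φ y := by
    intro y
    have h1 : h p₀ + ⟪s₀, y - p₀⟫ ≤ h y := hs₀ y
    have h2 : -(K * ‖y - p₀‖) ≤ ⟪s₀, y - p₀⟫ := by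
      have := abs_real_inner_le_norm s₀ (y - p₀)
      rw [abs_le] at this
      simpa [hK] using this.1
    have h3 : ‖y - p₀‖ ≤ ‖y - a‖ + ‖a - p₀‖ := norm_sub_le_norm_sub_add_norm_sub y a p₀
    have hK0 : 0 ≤ K := norm_nonneg _
    have h4 : -(K * (‖y - a‖ + ‖a - p₀‖)) ≤ ⟪s₀, y - p₀⟫ := by
      nlinarith
    simp only [hq, hφ, hc]
    nlinarith
  have hqatTop : Filter.Tendsto q Filter.atTop Filter.atTop := by
    apply Filter.tendsto_atTop_mono' _ _
      (Filter.tendsto_atTop_add_const_right _ c Filter.tendsto_id)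
    filter_upwards [Filter.eventually_ge_atTop (2 * t * (K + 1)), Filter.eventually_ge_atTop 0]
      with r hr hr0
    have : r * 1 ≤ r * (r / (2 * t) - K) := by
      apply mul_le_mul_of_nonneg_left _ hr0
      rw [le_sub_iff_add_le, le_div_iff₀ h2t]
      linarith
    have hexp : r * (r / (2 * t) - K) = r ^ 2 / (2 * t) - K * r := by ring
    simp only [hq, id]
    nlinarith
  have hdist : Filter.Tendsto (fun y : E => ‖y - a‖) (Filter.cocompact _) Filter.atTop := by
    have := tendsto_dist_right_cocompact_atTop a (α := E)
    simpa [dist_eq_norm] using this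
  have hφtend : Filter.Tendsto φ (Filter.cocompact _) Filter.atTop :=
    Filter.tendsto_atTop_mono hlb (hqatTop.comp hdist)
  obtain ⟨p, hp⟩ := hφcont.exists_forall_le hφtend
  exact ⟨p, isMinOn_iff.mpr fun y _ => hp y⟩

/-- A convex function with all subgradients bounded by `√Ch` satisfies the
corresponding Lipschitz-type estimate, provided it has at least one subgradient. -/
lemma lipschitz_of_subgrad_bound {h : E → ℝ} (hh : ConvexOn ℝ Set.univ h) {Ch : ℝ}
    (hCh0 : 0 ≤ Ch)
    (hsub : ∀ z g₀, SubgradAt h g₀ z → ‖g₀‖ ^ 2 ≤ Ch) {s₀ p₀ : E}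
    (hs₀ : SubgradAt h s₀ p₀) (a b : E) :
    h a - h b ≤ Real.sqrt Ch * ‖a - b‖ := by
  set B : ℝ := Real.sqrt Ch with hB
  have hB0 : 0 ≤ B := Real.sqrt_nonneg _
  have hBB : B * B = Ch := Real.mul_self_sqrt hCh0
  rw [sub_le_iff_le_add]
  apply le_of_forall_pos_le_add
  intro ε hε
  have hcont : Continuous h := hh.locallyLipschitz.continuous
  obtain ⟨δ, hδ0, hδ⟩ := Metric.continuousAt_iff.mp (hcont.continuousAt (x := a)) (ε / 2)
    (by linarith)
  set t : ℝ := min (δ / (B + 1)) (ε / (2 * (Ch + 1))) with htdef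
  have ht : 0 < t := lt_min (by positivity) (by positivity)
  obtain ⟨p, hp⟩ := prox_exists hh hs₀ ht a
  have hsgp : SubgradAt h (t⁻¹ • (a - p)) p := subgradAt_of_prox hh ht hp
  set s : E := t⁻¹ • (a - p) with hs
  have hsB : ‖s‖ ≤ B := by
    have h1 := hsub p s hsgp
    have := Real.sqrt_le_sqrt h1
    rwa [Real.sqrt_sq (norm_nonneg s)] at this
  have hap : ‖a - p‖ = t * ‖s‖ := by
    have h1 : a - p = t • s := by
      rw [hs, smul_inv_smul₀ (ne_of_gt ht)]
    rw [h1, norm_smul, Real.norm_eq_abs, abs_of_pos ht]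
  have haplt : ‖a - p‖ < δ := by
    have h1 : t * ‖s‖ ≤ t * B := mul_le_mul_of_nonneg_left hsB (le_of_lt ht)
    have h2 : t * B ≤ (δ / (B + 1)) * B :=
      mul_le_mul_of_nonneg_right (min_le_left _ _) hB0
    have h3 : (δ / (B + 1)) * B < δ := by
      rw [div_mul_eq_mul_div, div_lt_iff₀ (by positivity : (0:ℝ) < B + 1)]
      nlinarith
    rw [hap]; linarith
  have hha : h a ≤ h p + ε / 2 := by
    have h0 : dist p a < δ := by rwa [dist_eq_norm, ← norm_sub_rev]
    have := hδ h0
    rw [Real.dist_eq, abs_lt] at this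
    linarith [this.1]
  have hhp : h p ≤ h b + B * ‖a - b‖ + ε / 2 := by
    have h1 : h p + ⟪s, b - p⟫ ≤ h b := hsgp b
    have h2 : -(‖s‖ * ‖b - p‖) ≤ ⟪s, b - p⟫ := by
      have := abs_real_inner_le_norm s (b - p)
      rw [abs_le] at this
      linarith [this.1]
    have h3 : ‖b - p‖ ≤ ‖b - a‖ + ‖a - p‖ := norm_sub_le_norm_sub_add_norm_sub b a p
    have h4 : ‖s‖ * ‖b - p‖ ≤ B * (‖a - b‖ + t * B) := by
      have hba : ‖b - a‖ = ‖a - b‖ := norm_sub_rev b a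
      have : ‖b - p‖ ≤ ‖a - b‖ + t * B := by
        rw [hap] at h3
        have := mul_le_mul_of_nonneg_left hsB (le_of_lt ht)
        linarith [h3, hba ▸ h3]
      exact mul_le_mul hsB this (by positivity) hB0
    have h5 : B * (t * B) ≤ ε / 2 := by
      have htle : t ≤ ε / (2 * (Ch + 1)) := min_le_right _ _
      have : B * (t * B) = t * Ch := by rw [← hBB]; ring
      rw [this]
      have h6 : t * Ch ≤ (ε / (2 * (Ch + 1))) * Ch :=
        mul_le_mul_of_nonneg_right htle hCh0
      have h7 : (ε / (2 * (Ch + 1))) * Ch ≤ ε / 2 := by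
        rw [div_mul_eq_mul_div, div_le_div_iff₀ (by positivity) (by norm_num)]
        nlinarith
      linarith
    nlinarith [h1, h2, h4, h5]
  linarith

end Aux

set_option maxHeartbeats 1000000 in
/-- Bound on the term Q₃ (inequality (eqn:t3)): the expected function-value
change of a single stochastic proximal-gradient step. -/
theorem expected_value_change_bound (n : ℕ) {Ω : Type*} [MeasurableSpace Ω]
    (P : Measure Ω) [IsProbabilityMeasure P]
    (f h : EuclideanSpace ℝ (Fin n) → ℝ)
    (f' : EuclideanSpace ℝ (Fin n) → EuclideanSpace ℝ (Fin n))
    (L : ℝ) (hL : 0 < L)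
    (hgrad : ∀ z, HasGradientAt f (f' z) z)
    (hlip : ∀ z w, ‖f' z - f' w‖ ≤ L * ‖z - w‖)
    (hfconv : ConvexOn ℝ Set.univ f)
    (hhconv : ConvexOn ℝ Set.univ h)
    (Ch : ℝ)
    (hsub : ∀ z g₀, SubgradAt h g₀ z → ‖g₀‖ ^ 2 ≤ Ch)
    (xs : EuclideanSpace ℝ (Fin n))
    (hmin : IsMinOn (fun z => f z + h z) Set.univ xs)
    (hgradopt : ‖f' xs‖ ^ 2 ≤ Ch)
    (eta : ℝ) (heta : 0 < eta)
    (Cf : ℝ)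
    (x : EuclideanSpace ℝ (Fin n))
    (g : Ω → EuclideanSpace ℝ (Fin n))
    (hgint : Integrable g P)
    (hunbiased : ∫ ω, g ω ∂P = f' x)
    (hvar2int : Integrable (fun ω => ‖g ω - f' x‖ ^ 2) P)
    (hvar : ∫ ω, ‖g ω - f' x‖ ^ 2 ∂P ≤ Cf)
    (x' : Ω → EuclideanSpace ℝ (Fin n))
    (hprox : ∀ ω, IsMinOn
      (fun y => ‖y - (x - eta • g ω)‖ ^ 2 / (2 * eta) + h y) Set.univ (x' ω))
    (hint : Integrable (fun ω => f (x' ω) + h (x' ω)) P) :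
    ∫ ω, ((f x + h x) - (f (x' ω) + h (x' ω))) ∂P
      ≤ 9 * eta * L ^ 2 * ‖x - xs‖ ^ 2 + 4 * eta * Cf + (23 / 2) * eta * Ch := by
  classical
  have hΩ : Nonempty Ω := by
    by_contra hc
    rw [not_nonempty_iff] at hc
    have h1 : P Set.univ = 0 := by
      rw [Set.univ_eq_empty_iff.mpr hc]
      exact measure_empty
    rw [measure_univ] at h1
    exact one_ne_zero h1
  obtain ⟨ω₀⟩ := hΩ
  have hCh0 : 0 ≤ Ch := le_trans (by positivity) hgradopt
  set B : ℝ := Real.sqrt Ch with hB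
  have hB0 : 0 ≤ B := Real.sqrt_nonneg _
  have hBB : B * B = Ch := Real.mul_self_sqrt hCh0
  have hfxsB : ‖f' xs‖ ≤ B := by
    have := Real.sqrt_le_sqrt hgradopt
    rwa [Real.sqrt_sq (norm_nonneg _)] at this
  have hsg : ∀ ω, SubgradAt h (eta⁻¹ • ((x - eta • g ω) - x' ω)) (x' ω) :=
    fun ω => subgradAt_of_prox hhconv heta (hprox ω)
  have hLip : ∀ a b, h a - h b ≤ B * ‖a - b‖ :=
    fun a b => lipschitz_of_subgrad_bound hhconv hCh0 hsub (hsg ω₀) a b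
  set A : ℝ := L * ‖x - xs‖ with hA
  have hA0 : 0 ≤ A := mul_nonneg (le_of_lt hL) (norm_nonneg _)
  clear_value A B
  have key : ∀ ω, (f x + h x) - (f (x' ω) + h (x' ω))
      ≤ eta * ((9 / 2) * A ^ 2 + 9 * Ch) + (eta / 2) * ‖g ω - f' x‖ ^ 2 := by
    intro ω
    set p : EuclideanSpace ℝ (Fin n) := x' ω with hpdef
    set s : EuclideanSpace ℝ (Fin n) := eta⁻¹ • ((x - eta • g ω) - p) with hsdef
    have hss : SubgradAt h s p := hsg ω
    have hsB : ‖s‖ ≤ B := by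
      have h1 := hsub p s hss
      have := Real.sqrt_le_sqrt h1
      rw [Real.sqrt_sq (norm_nonneg s)] at this
      rw [hB]
      exact this
    set D : ℝ := ‖g ω - f' x‖ with hD
    have hD0 : 0 ≤ D := norm_nonneg _
    have hxp : x - p = eta • (g ω + s) := by
      have h1 : eta • s = (x - eta • g ω) - p := by
        rw [hsdef, smul_inv_smul₀ (ne_of_gt heta)]
      rw [smul_add, h1]
      abel
    clear_value p s
    have hnorm : ‖x - p‖ ≤ eta * (‖g ω‖ + B) := by
      rw [hxp, norm_smul, Real.norm_eq_abs, abs_of_pos heta]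
      exact mul_le_mul_of_nonneg_left (le_trans (norm_add_le _ _) (by linarith))
        (le_of_lt heta)
    have hfpart : f x - f p ≤ ‖f' x‖ * ‖x - p‖ := by
      have h1 := grad_convex_le hfconv hgrad x p
      have h2 : -(‖f' x‖ * ‖p - x‖) ≤ ⟪f' x, p - x⟫ := by
        have := abs_real_inner_le_norm (f' x) (p - x)
        rw [abs_le] at this
        linarith [this.1]
      have h3 : ‖p - x‖ = ‖x - p‖ := norm_sub_rev p x
      rw [h3] at h2
      linarith
    have hhpart : h x - h p ≤ B * ‖x - p‖ := hLip x p
    have hfx : ‖f' x‖ ≤ A + B := by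
      calc ‖f' x‖ = ‖(f' x - f' xs) + f' xs‖ := by
              congr 1
              abel
        _ ≤ ‖f' x - f' xs‖ + ‖f' xs‖ := norm_add_le _ _
        _ ≤ L * ‖x - xs‖ + B := add_le_add (hlip x xs) hfxsB
        _ = A + B := by rw [hA]
    have hgw : ‖g ω‖ ≤ D + (A + B) := by
      calc ‖g ω‖ = ‖(g ω - f' x) + f' x‖ := by
              congr 1
              abel
        _ ≤ ‖g ω - f' x‖ + ‖f' x‖ := norm_add_le _ _
        _ ≤ D + (A + B) := add_le_add (le_of_eq hD.symm) hfx
    have hxp0 : 0 ≤ ‖x - p‖ := norm_nonneg _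
    have chain : (f x + h x) - (f p + h p) ≤ (A + 2 * B) * (eta * (D + A + 2 * B)) := by
      have c1 : (f x + h x) - (f p + h p) ≤ (‖f' x‖ + B) * ‖x - p‖ := by
        have := add_le_add hfpart hhpart
        nlinarith [this]
      have c2 : (‖f' x‖ + B) * ‖x - p‖ ≤ (A + 2 * B) * ‖x - p‖ :=
        mul_le_mul_of_nonneg_right (by linarith) hxp0
      have c3 : ‖x - p‖ ≤ eta * (D + A + 2 * B) := by
        refine le_trans hnorm ?_
        apply mul_le_mul_of_nonneg_left _ (le_of_lt heta)
        linarith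
      have c4 : (A + 2 * B) * ‖x - p‖ ≤ (A + 2 * B) * (eta * (D + A + 2 * B)) :=
        mul_le_mul_of_nonneg_left c3 (by linarith)
      linarith
    have quad : (A + 2 * B) * (D + A + 2 * B)
        ≤ (9 / 2) * A ^ 2 + 9 * (B * B) + (1 / 2) * D ^ 2 := by
      nlinarith [sq_nonneg (A + 2 * B - D), sq_nonneg (A - B), mul_nonneg hA0 hB0]
    have hmul := mul_le_mul_of_nonneg_left quad (le_of_lt heta)
    rw [hBB] at hmul
    have e0 : (A + 2 * B) * (eta * (D + A + 2 * B))
        = eta * ((A + 2 * B) * (D + A + 2 * B)) := by ring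
    have e1 : eta * ((9 / 2) * A ^ 2 + 9 * Ch + 1 / 2 * D ^ 2)
        = eta * ((9 / 2) * A ^ 2 + 9 * Ch) + (eta / 2) * D ^ 2 := by ring
    linarith [chain, hmul]
  have hlhsint : Integrable (fun ω => (f x + h x) - (f (x' ω) + h (x' ω))) P :=
    (integrable_const _).sub hint
  have hrhsint : Integrable
      (fun ω => eta * ((9 / 2) * A ^ 2 + 9 * Ch) + (eta / 2) * ‖g ω - f' x‖ ^ 2) P :=
    (integrable_const _).add (hvar2int.const_mul _)
  have hmono := integral_mono hlhsint hrhsint key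
  rw [integral_add (integrable_const _) (hvar2int.const_mul _), integral_const,
    integral_const_mul, probReal_univ] at hmono
  simp only [ENNReal.toReal_one, one_smul] at hmono
  have hV0 : 0 ≤ ∫ ω, ‖g ω - f' x‖ ^ 2 ∂P := integral_nonneg fun ω => by positivity
  have hCf0 : 0 ≤ Cf := le_trans hV0 hvar
  have hAsq : A ^ 2 = L ^ 2 * ‖x - xs‖ ^ 2 := by rw [hA]; ring
  rw [hAsq] at hmono
  set V : ℝ := ∫ ω, ‖g ω - f' x‖ ^ 2 ∂P with hVdef
  have hscaled : (eta / 2) * V ≤ (eta / 2) * Cf :=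
    mul_le_mul_of_nonneg_left hvar (by linarith)
  have hX : 0 ≤ eta * (L ^ 2 * ‖x - xs‖ ^ 2) :=
    mul_nonneg (le_of_lt heta) (mul_nonneg (sq_nonneg L) (sq_nonneg _))
  have hetaCh : 0 ≤ eta * Ch := mul_nonneg (le_of_lt heta) hCh0
  have hetaCf : 0 ≤ eta * Cf := mul_nonneg (le_of_lt heta) hCf0
  have e1 : eta * (9 / 2 * (L ^ 2 * ‖x - xs‖ ^ 2) + 9 * Ch)
      = (9 / 2) * (eta * (L ^ 2 * ‖x - xs‖ ^ 2)) + 9 * (eta * Ch) := by ring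
  have e2 : 9 * eta * L ^ 2 * ‖x - xs‖ ^ 2 = 9 * (eta * (L ^ 2 * ‖x - xs‖ ^ 2)) := by ring
  have e3 : (23 / 2) * eta * Ch = (23 / 2) * (eta * Ch) := by ring
  have e4 : 4 * eta * Cf = 4 * (eta * Cf) := by ring
  have e5 : (eta / 2) * Cf = (1 / 2) * (eta * Cf) := by ring
  linarith [hmono, hscaled]
end
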